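/- arXiv:1807.03768 — 4 statements merged into one kernel-verified Lean document; each statement's English description precedes it below -/
import Mathlib

section
/- Let δ, κ ≥ 1 be integers. If 𝒞 is an ideal of (δ,κ)-good graphs with unbounded chromatic number, then there exist a subideal 𝒞' of 𝒞 with unbounded chromatic number and a number c such that every matching-covered set in every member of 𝒞' has chromatic number at most c. -/
/-- Vertices of the tree `T(δ)`: a handle, δ (1,δ)-brooms and δ (2,δ)-brooms. -/
inductive TVert (δ : ℕ) : Type
  | handle : TVert δ
  | stem1 : Fin δ → TVert δ
  | leaf1 : Fin δ → Fin δ → TVert δ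
  | stem2 : Fin δ → TVert δ
  | end2 : Fin δ → TVert δ
  | leaf2 : Fin δ → Fin δ → TVert δ

/-- The tree `T(δ)`, formed from δ (1,δ)-brooms and δ (2,δ)-brooms by identifying handles. -/
def TGraph (δ : ℕ) : SimpleGraph (TVert δ) :=
  SimpleGraph.fromRel (fun u v =>
    (∃ i, u = TVert.handle ∧ v = TVert.stem1 i) ∨
    (∃ i m, u = TVert.stem1 i ∧ v = TVert.leaf1 i m) ∨
    (∃ j, u = TVert.handle ∧ v = TVert.stem2 j) ∨
    (∃ j, u = TVert.stem2 j ∧ v = TVert.end2 j) ∨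
    (∃ j m, u = TVert.end2 j ∧ v = TVert.leaf2 j m))

/-- `G` is `T(δ)`-free: no induced subgraph of `G` is isomorphic to `T(δ)`. -/
def TdeltaFree (δ : ℕ) {V : Type} (G : SimpleGraph V) : Prop :=
  IsEmpty (SimpleGraph.Embedding (TGraph δ) G)

/-- `N²[v]`: the set of vertices at distance at most 2 from `v`. -/
def Ball2 {V : Type} (G : SimpleGraph V) (v : V) : Set V :=
  {u | u = v ∨ G.Adj v u ∨ ∃ w, G.Adj v w ∧ G.Adj w u}

/-- `χ²(G) ≤ τ`: every ball of radius 2 induces a subgraph of chromatic number at most `τ`. -/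
def ChiTwoLe {V : Type} (G : SimpleGraph V) (τ : ℕ) : Prop :=
  ∀ v : V, (G.induce (Ball2 G v)).chromaticNumber ≤ (τ : ℕ∞)

/-- `X` is matching-covered in `G`. -/
def MatchingCovered {V : Type} (G : SimpleGraph V) (X : Set V) : Prop :=
  ∀ x ∈ X, ∃ y, y ∉ X ∧ G.Adj x y ∧ ∀ x' ∈ X, G.Adj x' y → x' = x

/-- `A` lists the parts of an `(a,b)`-core: `b` pairwise disjoint stable sets of size `a`,
complete to each other. -/
def IsCoreParts {V : Type} (G : SimpleGraph V) (a : ℕ) {b : ℕ} (A : Fin b → Set V) : Prop :=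
  (∀ i, (A i).encard = (a : ℕ∞)) ∧
  (∀ i j, i ≠ j → Disjoint (A i) (A j)) ∧
  (∀ i, ∀ x ∈ A i, ∀ y ∈ A i, ¬ G.Adj x y) ∧
  (∀ i j, i ≠ j → ∀ x ∈ A i, ∀ y ∈ A j, G.Adj x y)

/-- `G` admits an `(a,b)`-core. -/
def HasCore {V : Type} (G : SimpleGraph V) (a b : ℕ) : Prop :=
  ∃ A : Fin b → Set V, IsCoreParts G a A

/-- `v` is dense to the core with parts `A`: `v` is outside the core and has at least `α`
neighbours in each part. -/
def DenseTo {V : Type} (G : SimpleGraph V) (α : ℕ) {b : ℕ} (A : Fin b → Set V) (v : V) : Prop :=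
  v ∉ (⋃ i, A i) ∧ ∀ i, (α : ℕ∞) ≤ (A i ∩ G.neighborSet v).encard

/-- `v` is `η`-mixed on the core with parts `A`. -/
def MixedOn {V : Type} (G : SimpleGraph V) (α η : ℕ) {b : ℕ} (A : Fin b → Set V) (v : V) : Prop :=
  ¬ DenseTo G α A v ∧ ∃ i, (η : ℕ∞) ≤ (A i ∩ G.neighborSet v).encard

/-- Conditions (i)–(v) of the paper, for fixed `τ, α, δ, β, θ`. -/
def Conditions (τ α δ β : ℕ) (θ : ℕ → ℕ) {V : Type} (G : SimpleGraph V) : Prop :=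
  TdeltaFree δ G ∧
  ChiTwoLe G τ ∧
  (∀ X : Set V, MatchingCovered G X → (G.induce X).chromaticNumber ≤ (τ : ℕ∞)) ∧
  (∀ a : ℕ, 1 ≤ a → (θ a : ℕ∞) < G.chromaticNumber → HasCore G a β) ∧
  ¬ HasCore G α (β + 1)

/-- A `(ζ,η)`-template array in `G`: a template sequence `(Y i, Hs i) (i : Fin n)` together
with a set `U`.  `A i` gives the parts of the core `Y i = ⋃ k, A i k`. -/
structure TemplateArray {V : Type} (G : SimpleGraph V) (α β ζ η : ℕ) (n : ℕ) where
  A : Fin n → Fin β → Set V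
  Hs : Fin n → Set V
  U : Set V
  core : ∀ i, IsCoreParts G ζ (A i)
  core_subset : ∀ i, (⋃ k, A i k) ⊆ Hs i
  mixed : ∀ i, ∀ v ∈ Hs i, MixedOn G α η (A i) v
  H_disj : ∀ i j, i ≠ j → Disjoint (Hs i) (Hs j)
  no_edge : ∀ i j : Fin n, i < j → ∀ u ∈ Hs i, ∀ y ∈ (⋃ k, A j k), ¬ G.Adj u y
  not_mixed : ∀ i j : Fin n, i < j → ∀ v ∈ Hs j, ¬ MixedOn G α η (A i) v
  U_not_H : ∀ v ∈ U, ∀ i, v ∉ Hs i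
  U_not_mixed : ∀ v ∈ U, ∀ i, ¬ MixedOn G α η (A i) v
  U_nbr : ∀ v ∈ U, ∃ i, ∃ u ∈ Hs i, G.Adj v u

namespace TemplateArray

variable {V : Type} {G : SimpleGraph V} {α β ζ η n : ℕ}

/-- The core `Y_i` of the template array. -/
def Y (T : TemplateArray G α β ζ η n) (i : Fin n) : Set V := ⋃ k, T.A i k

/-- `H(𝒯) = H_1 ∪ ⋯ ∪ H_n`. -/
def Hall (T : TemplateArray G α β ζ η n) : Set V := ⋃ i, T.Hs i

/-- `Y(𝒯) = Y_1 ∪ ⋯ ∪ Y_n`. -/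
def Yall (T : TemplateArray G α β ζ η n) : Set V := ⋃ i, T.Y i

/-- `Z(𝒯) = H(𝒯) \ Y(𝒯)`. -/
def Zall (T : TemplateArray G α β ζ η n) : Set V := T.Hall \ T.Yall

/-- `V(𝒯) = H(𝒯) ∪ U(𝒯)`. -/
def Vall (T : TemplateArray G α β ζ η n) : Set V := T.Hall ∪ T.U

/-- The template array is 1-cleaned: no vertex of `V(𝒯)` is dense to any `Y_i`. -/
def Cleaned1 (T : TemplateArray G α β ζ η n) : Prop :=
  ∀ i : Fin n, ∀ v ∈ T.Vall, ¬ DenseTo G α (T.A i) v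

/-- The template array is 2-cleaned. -/
def Cleaned2 (T : TemplateArray G α β ζ η n) : Prop :=
  T.Cleaned1 ∧
  (∀ i j : Fin n, i ≠ j → ∀ u ∈ T.Hs i, ∀ w ∈ T.Hs j, ¬ G.Adj u w) ∧
  (∀ i : Fin n, ∀ u ∈ T.Hs i \ T.Y i, ∀ w ∈ T.Hs i \ T.Y i, ¬ G.Adj u w)

/-- A privatization for the template array. -/
def Privatization (T : TemplateArray G α β ζ η n) (δ τ : ℕ) (P : Set V) : Prop :=
  P ⊆ T.U ∧
  (∃ M : Fin (δ * τ) → Set V, (⋃ i, M i) = P ∧ ∀ i, MatchingCovered G (M i)) ∧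
  (∀ v ∈ P, (T.Zall ∩ G.neighborSet v).encard = 1 ∧ ∀ y ∈ T.Yall, ¬ G.Adj v y) ∧
  (∀ z ∈ T.Zall, (P ∩ G.neighborSet z).encard = ((δ * τ : ℕ) : ℕ∞))

/-- `B` is a shadowing of the template array. -/
def Shadowing (T : TemplateArray G α β ζ η n) (B : Fin n → Set V) : Prop :=
  (∀ i, B i ⊆ T.U) ∧
  (∀ i j, i ≠ j → Disjoint (B i) (B j)) ∧
  (⋃ i, B i) = T.U ∧
  (∀ i, ∀ v ∈ B i, ∃ u ∈ T.Hs i, G.Adj v u)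

/-- The shadowing `B` has degree at most `s` relative to `X`. -/
def DegreeLeRel (T : TemplateArray G α β ζ η n) (B : Fin n → Set V) (s : ℕ) (X : Set V) :
    Prop :=
  ∀ v ∈ T.Vall, ({i : Fin n | ∃ u ∈ B i ∩ X, G.Adj v u}).encard ≤ (s : ℕ∞)

/-- `(u, v, P)` is a daisy with root `u`, eye `v` and petal set `P`, with respect to the
template array and the shadowing `B`. -/
def IsDaisy (T : TemplateArray G α β ζ η n) (δ : ℕ) (B : Fin n → Set V)
    (u v : V) (P : Set V) : Prop :=
  (∃ i, u ∈ T.Hs i ∧ ∃ j, j ≠ i ∧ P ⊆ B j) ∧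
  v ∈ T.U ∧
  P.encard = (δ : ℕ∞) ∧
  u ∉ P ∧ v ∉ P ∧ u ≠ v ∧
  G.Adj u v ∧
  (∀ p ∈ P, G.Adj v p) ∧
  (∀ p ∈ P, ¬ G.Adj u p) ∧
  (∀ p ∈ P, ∀ q ∈ P, ¬ G.Adj p q)

/-- `{(u j, v j, P j) : j ∈ J}` is a bunch of daisies with all roots in `Hs i`. -/
def IsBunch (T : TemplateArray G α β ζ η n) (δ : ℕ) (B : Fin n → Set V) (i : Fin n)
    (J : Set (Fin n)) (u v : Fin n → V) (P : Fin n → Set V) : Prop :=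
  i ∉ J ∧
  (∀ j ∈ J, T.IsDaisy δ B (u j) (v j) (P j)) ∧
  (∀ j ∈ J, u j ∈ T.Hs i) ∧
  (∀ j ∈ J, P j ⊆ B j) ∧
  (∀ j ∈ J, ∀ j' ∈ J, j ≠ j' → Disjoint (P j ∪ {v j}) (P j' ∪ {v j'})) ∧
  (∀ j ∈ J, ∀ j' ∈ J, j ≠ j' → ∀ x ∈ P j ∪ {v j}, ∀ y ∈ P j' ∪ {v j'}, ¬ G.Adj x y) ∧
  (∀ j ∈ J, ∀ j' ∈ J, j ≠ j' → ∀ p ∈ P j', ¬ G.Adj (u j) p)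

end TemplateArray

/-- A class of graphs (on arbitrary vertex types). -/
def GraphClass : Type 1 := ∀ V : Type, SimpleGraph V → Prop

/-- An ideal of graphs: closed under (copies of) induced subgraphs. -/
def IsIdeal (C : GraphClass) : Prop :=
  ∀ (V W : Type) (G : SimpleGraph V) (H : SimpleGraph W),
    C V G → Nonempty (SimpleGraph.Embedding H G) → C W H

/-- The class `C` has unbounded chromatic number. -/
def UnboundedChi (C : GraphClass) : Prop :=
  ∀ c : ℕ, ∃ (V : Type) (G : SimpleGraph V), C V G ∧ (c : ℕ∞) < G.chromaticNumber

/-- `G` is `(δ,κ)`-good: `T(δ)`-free with clique number at most `κ`. -/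
def GoodGraph (δ κ : ℕ) {V : Type} (G : SimpleGraph V) : Prop :=
  TdeltaFree δ G ∧ G.CliqueFree (κ + 1)

/-!
Restrict `C` to the graphs all of whose matching-covered sets have chromatic number at most `c`.
These restrictions are ideals; if one of them is still χ-unbounded we are done. Otherwise each is
χ-bounded by some `bnd c`, and a graph `G ∈ C` with `χ(G) > bnd^[n] 0` contains a matching-covered
set `X` with `χ(X) > bnd^[n-1] 0`; repeating inside `G[X]` yields a chain
`V = S₀ ⊇ S₁ ⊇ ⋯ ⊇ Sₙ ≠ ∅` with each `Sₖ₊₁` matching-covered in `G[Sₖ]`.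
Such a chain contains every tree whose vertices are ranked in `{0, …, n}` with parents above
children: the root goes into `Sₙ`, and each other vertex `t` goes to a private neighbour in
`S_{rank t}` of the image of its parent. Privacy makes the copy induced, so `T(δ)` would appear.
-/

open SimpleGraph

variable {V W : Type}

/-- `X ⊆ Y` is matching-covered in `G[Y]`, phrased on subsets of `V`. -/
def MatchingCoveredIn (G : SimpleGraph V) (Y X : Set V) : Prop :=
  X ⊆ Y ∧ ∀ x ∈ X, ∃ y ∈ Y \ X, G.Adj x y ∧ ∀ x' ∈ X, G.Adj x' y → x' = x

namespace MatchingCoveredIn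

variable {G : SimpleGraph V} {H : SimpleGraph W}

lemma mono {X Y Y' : Set V} (h : MatchingCoveredIn G Y X) (hY : Y ⊆ Y') :
    MatchingCoveredIn G Y' X := by
  refine ⟨h.1.trans hY, fun x hx => ?_⟩
  obtain ⟨y, ⟨hyY, hyX⟩, hxy, hpriv⟩ := h.2 x hx
  exact ⟨y, ⟨hY hyY, hyX⟩, hxy, hpriv⟩

lemma image (f : H ↪g G) {X Y : Set W} (h : MatchingCoveredIn H Y X) :
    MatchingCoveredIn G (f '' Y) (f '' X) := by
  refine ⟨Set.image_mono h.1, ?_⟩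
  rintro _ ⟨x, hx, rfl⟩
  obtain ⟨y, ⟨hyY, hyX⟩, hxy, hpriv⟩ := h.2 x hx
  refine ⟨f y, ⟨Set.mem_image_of_mem f hyY, ?_⟩, f.map_adj_iff.2 hxy, ?_⟩
  · rwa [f.injective.mem_set_image]
  · rintro _ ⟨x', hx', rfl⟩ hadj
    exact congrArg f (hpriv x' hx' (f.map_adj_iff.1 hadj))

end MatchingCoveredIn

lemma matchingCoveredIn_univ_iff {G : SimpleGraph V} {X : Set V} :
    MatchingCoveredIn G Set.univ X ↔ MatchingCovered G X := by
  simp [MatchingCoveredIn, MatchingCovered]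

lemma MatchingCovered.image {G : SimpleGraph V} {H : SimpleGraph W} (f : H ↪g G) {X : Set W}
    (h : MatchingCovered H X) : MatchingCovered G (f '' X) :=
  matchingCoveredIn_univ_iff.1 <|
    ((matchingCoveredIn_univ_iff.2 h).image f).mono (Set.subset_univ _)

lemma chromaticNumber_induce_le_image {G : SimpleGraph V} {H : SimpleGraph W} (f : H →g G)
    (X : Set W) : (H.induce X).chromaticNumber ≤ (G.induce (f '' X)).chromaticNumber :=
  chromaticNumber_mono_of_hom (induceHom f (Set.mapsTo_image f X))

def MatchingCoveredChiLe (G : SimpleGraph V) (c : ℕ) : Prop :=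
  ∀ X : Set V, MatchingCovered G X → (G.induce X).chromaticNumber ≤ (c : ℕ∞)

lemma MatchingCoveredChiLe.of_embedding {G : SimpleGraph V} {H : SimpleGraph W} (f : H ↪g G)
    {c : ℕ} (h : MatchingCoveredChiLe G c) : MatchingCoveredChiLe H c :=
  fun X hX => (chromaticNumber_induce_le_image f.toHom X).trans (h _ (hX.image f))

lemma IsIdeal.and_matchingCoveredChiLe {C : GraphClass} (hC : IsIdeal C) (c : ℕ) :
    IsIdeal (fun V G => C V G ∧ MatchingCoveredChiLe G c) :=
  fun V W G H hG ⟨f⟩ => ⟨hC V W G H hG.1 ⟨f⟩, hG.2.of_embedding f⟩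

def IsMatchingCoveredChain (G : SimpleGraph V) (S : ℕ → Set V) (n : ℕ) : Prop :=
  ∀ k < n, MatchingCoveredIn G (S k) (S (k + 1))

lemma IsMatchingCoveredChain.antitone {G : SimpleGraph V} {S : ℕ → Set V} {n : ℕ}
    (h : IsMatchingCoveredChain G S n) {i j : ℕ} (hij : i ≤ j) (hjn : j ≤ n) : S j ⊆ S i := by
  induction j, hij using Nat.le_induction with
  | base => rfl
  | succ j hij ih => exact (h j hjn).1.trans (ih (by omega))

lemma exists_isMatchingCoveredChain {C : GraphClass} (hC : IsIdeal C) {bnd : ℕ → ℕ}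
    (hbnd : ∀ (c : ℕ) (V : Type) (G : SimpleGraph V),
      C V G ∧ MatchingCoveredChiLe G c → G.chromaticNumber ≤ (bnd c : ℕ∞)) :
    ∀ (n : ℕ) {V : Type} {G : SimpleGraph V}, C V G → (bnd^[n] 0 : ℕ∞) < G.chromaticNumber →
      ∃ S : ℕ → Set V, S 0 = Set.univ ∧ IsMatchingCoveredChain G S n ∧ (S n).Nonempty
  | 0, V, G, _, hχ => by
    have : Nonempty V := by
      by_contra hV
      simp [chromaticNumber_eq_zero_iff.2 (not_nonempty_iff.1 hV)] at hχ
    exact ⟨fun _ => Set.univ, rfl, fun k hk => absurd hk k.not_lt_zero, Set.univ_nonempty⟩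
  | n + 1, V, G, hG, hχ => by
    have hnot : ¬ MatchingCoveredChiLe G (bnd^[n] 0) := fun h =>
      (hbnd _ V G ⟨hG, h⟩).not_gt (by rwa [Function.iterate_succ_apply'] at hχ)
    obtain ⟨X, hX, hXχ⟩ : ∃ X, MatchingCovered G X ∧
        (bnd^[n] 0 : ℕ∞) < (G.induce X).chromaticNumber := by
      simpa [MatchingCoveredChiLe] using hnot
    obtain ⟨S, hS0, hS, hSn⟩ :=
      exists_isMatchingCoveredChain hC hbnd n (hC _ _ _ _ hG ⟨Embedding.induce X⟩) hXχ
    refine ⟨fun | 0 => Set.univ | k + 1 => Subtype.val '' S k, rfl, ?_, hSn.image _⟩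
    rintro (_ | k) hk
    · simpa [hS0, matchingCoveredIn_univ_iff] using hX
    · exact (hS k (by omega)).image (Embedding.induce X)

lemma Finite.exists_injective_nat_lt_of_lt [Finite W] (h : W → ℕ) :
    ∃ r : W → ℕ, Function.Injective r ∧ ∀ a b, h a < h b → r a < r b := by
  obtain ⟨M, ⟨e⟩⟩ := Finite.exists_equiv_fin W
  have hlt : ∀ a b, h a < h b → h a * M + e a < h b * M + e b := fun a b hab =>
    calc h a * M + e a < (h a + 1) * M := by have := (e a).2; rw [add_mul]; omega
      _ ≤ h b * M := Nat.mul_le_mul_right M hab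
      _ ≤ h b * M + e b := Nat.le_add_right _ _
  refine ⟨fun t => h t * M + e t, fun a b hab => ?_, hlt⟩
  rcases lt_trichotomy (h a) (h b) with hh | hh | hh
  · exact absurd hab (hlt a b hh).ne
  · exact e.injective (Fin.ext (by simp only [hh] at hab; omega))
  · exact absurd hab (hlt b a hh).ne'

section RankedTree

variable {T : SimpleGraph W} {root : W} {parent : W → W} {rank : W → ℕ}

lemma rank_le_rank_root (hroot : ∀ t ≠ root, rank t < rank root) (t : W) : rank t ≤ rank root := by
  rcases eq_or_ne t root with rfl | ht
  exacts [le_rfl, (hroot t ht).le]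

lemma wellFounded_parent (hparent : ∀ t ≠ root, rank t < rank (parent t))
    (hroot : ∀ t ≠ root, rank t < rank root) :
    WellFounded fun a b : W => b ≠ root ∧ a = parent b := by
  refine Subrelation.wf (r := InvImage (· < ·) fun t => rank root - rank t) ?_
    (InvImage.wf _ wellFounded_lt)
  rintro a b ⟨hb, rfl⟩
  have := rank_le_rank_root hroot (parent b)
  have := hparent b hb
  show rank root - rank (parent b) < rank root - rank b
  omega

lemma exists_parent_recursion (hwf : WellFounded fun a b : W => b ≠ root ∧ a = parent b)
    (x : V) (g : W → V → V) : ∃ f : W → V, f root = x ∧ ∀ t ≠ root, f t = g t (f (parent t)) := by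
  classical
  exact ⟨hwf.fix fun t rec => if ht : t = root then x else g t (rec (parent t) ⟨ht, rfl⟩),
    by rw [hwf.fix_eq, dif_pos rfl], fun t ht => by rw [hwf.fix_eq, dif_neg ht]⟩

variable {G : SimpleGraph V} {S : ℕ → Set V}

lemma IsMatchingCoveredChain.exists_map_of_rank (hS : IsMatchingCoveredChain G S (rank root))
    (hne : (S (rank root)).Nonempty) (hparent : ∀ t ≠ root, rank t < rank (parent t))
    (hroot : ∀ t ≠ root, rank t < rank root) :
    ∃ f : W → V, (∀ t, f t ∈ S (rank t)) ∧ ∀ t ≠ root, f t ∉ S (rank t + 1) ∧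
      G.Adj (f (parent t)) (f t) ∧ ∀ x ∈ S (rank t + 1), G.Adj x (f t) → x = f (parent t) := by
  have private_nbr (k : ℕ) (x : V) : ∃ y, k < rank root → x ∈ S (k + 1) →
      y ∈ S k \ S (k + 1) ∧ G.Adj x y ∧ ∀ x' ∈ S (k + 1), G.Adj x' y → x' = x := by
    by_cases h : k < rank root ∧ x ∈ S (k + 1)
    · obtain ⟨y, hy⟩ := (hS k h.1).2 x h.2
      exact ⟨y, fun _ _ => hy⟩
    · exact ⟨x, fun hk hx => (h ⟨hk, hx⟩).elim⟩
  choose pend hpend using private_nbr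
  have hwf := wellFounded_parent hparent hroot
  obtain ⟨f, hf_root, hf_parent⟩ := exists_parent_recursion hwf hne.some fun t y => pend (rank t) y
  have step (t : W) (ht : t ≠ root) (hp : f (parent t) ∈ S (rank (parent t))) :=
    hf_parent t ht ▸ hpend (rank t) (f (parent t)) (hroot t ht)
      (hS.antitone (hparent t ht) (rank_le_rank_root hroot _) hp)
  have mem (t : W) : f t ∈ S (rank t) := by
    induction t using hwf.induction with
    | _ t ih =>
      rcases eq_or_ne t root with rfl | ht
      · exact hf_root ▸ hne.some_mem
      · exact (step t ht (ih _ ⟨ht, rfl⟩)).1.1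
  exact ⟨f, mem, fun t ht => by
    obtain ⟨⟨-, hout⟩, hadj, hpriv⟩ := step t ht (mem _)
    exact ⟨hout, hadj, hpriv⟩⟩

theorem nonempty_embedding_of_isMatchingCoveredChain
    (hT : ∀ a b, T.Adj a b ↔ (b ≠ root ∧ a = parent b) ∨ (a ≠ root ∧ b = parent a))
    (hrank : Function.Injective rank) (hparent : ∀ t ≠ root, rank t < rank (parent t))
    (hroot : ∀ t ≠ root, rank t < rank root)
    (hS : IsMatchingCoveredChain G S (rank root)) (hne : (S (rank root)).Nonempty) :
    Nonempty (T ↪g G) := by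
  obtain ⟨f, mem, hf⟩ := hS.exists_map_of_rank hne hparent hroot
  have rank_le := rank_le_rank_root hroot
  have below {a b : W} (h : rank a < rank b) : f b ∈ S (rank a + 1) :=
    hS.antitone h (rank_le b) (mem b)
  have ne_root {a b : W} (h : rank b < rank a) : b ≠ root := fun hb =>
    (rank_le a).not_gt (hb ▸ h)
  have f_inj : Function.Injective f := by
    have ne_of_lt {a b : W} (h : rank a < rank b) : f a ≠ f b := fun hab =>
      (hf a (ne_root h)).1 (hab ▸ below h)
    intro a b hab
    rcases lt_trichotomy (rank a) (rank b) with h | h | h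
    exacts [(ne_of_lt h hab).elim, hrank h, (ne_of_lt h hab.symm).elim]
  -- privacy of `f b` forces `a` to be the parent of `b`
  have adj_of_lt {a b : W} (h : rank b < rank a) (hab : G.Adj (f a) (f b)) : T.Adj a b :=
    (hT a b).2 (Or.inl ⟨ne_root h, f_inj ((hf b (ne_root h)).2.2 (f a) (below h) hab)⟩)
  refine ⟨⟨⟨f, f_inj⟩, fun {a b} => ⟨fun hab => ?_, fun hab => ?_⟩⟩⟩
  · rcases lt_trichotomy (rank a) (rank b) with h | h | h
    · exact (adj_of_lt h hab.symm).symm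
    · exact absurd hab (hrank h ▸ G.irrefl)
    · exact adj_of_lt h hab
  · rcases (hT a b).1 hab with ⟨hb, rfl⟩ | ⟨ha, rfl⟩
    · exact (hf b hb).2.1
    · exact (hf a ha).2.1.symm

end RankedTree

namespace TVert

variable {δ : ℕ}

def parent : TVert δ → TVert δ
  | handle => handle
  | stem1 _ => handle
  | leaf1 i _ => stem1 i
  | stem2 _ => handle
  | end2 j => stem2 j
  | leaf2 j _ => end2 j

def height : TVert δ → ℕ
  | handle => 3
  | stem1 _ => 2
  | leaf1 _ _ => 0
  | stem2 _ => 2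
  | end2 _ => 1
  | leaf2 _ _ => 0

lemma height_lt_height_parent (t : TVert δ) (ht : t ≠ handle) : height t < height (parent t) := by
  cases t <;> simp_all [height, parent]

lemma height_lt_height_handle (t : TVert δ) (ht : t ≠ handle) :
    height t < height (handle : TVert δ) := by
  cases t <;> simp_all [height]

instance : Finite (TVert δ) :=
  Finite.of_surjective
    (fun s : Unit ⊕ Fin δ ⊕ (Fin δ × Fin δ) ⊕ Fin δ ⊕ Fin δ ⊕ (Fin δ × Fin δ) => match s with
      | .inl _ => handle
      | .inr (.inl i) => stem1 i
      | .inr (.inr (.inl (i, m))) => leaf1 i m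
      | .inr (.inr (.inr (.inl j))) => stem2 j
      | .inr (.inr (.inr (.inr (.inl j)))) => end2 j
      | .inr (.inr (.inr (.inr (.inr (j, m))))) => leaf2 j m)
    (by
      rintro (_ | i | ⟨i, m⟩ | j | j | ⟨j, m⟩)
      exacts [⟨.inl (), rfl⟩, ⟨.inr (.inl i), rfl⟩, ⟨.inr (.inr (.inl (i, m))), rfl⟩,
        ⟨.inr (.inr (.inr (.inl j))), rfl⟩, ⟨.inr (.inr (.inr (.inr (.inl j)))), rfl⟩,
        ⟨.inr (.inr (.inr (.inr (.inr (j, m))))), rfl⟩])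

lemma tGraph_adj_iff {a b : TVert δ} : (TGraph δ).Adj a b ↔
    (b ≠ handle ∧ a = parent b) ∨ (a ≠ handle ∧ b = parent a) := by
  rw [TGraph, SimpleGraph.fromRel_adj]
  constructor
  · rintro ⟨-, h | h⟩ <;>
      rcases h with ⟨i, rfl, rfl⟩ | ⟨i, m, rfl, rfl⟩ | ⟨j, rfl, rfl⟩ | ⟨j, rfl, rfl⟩ |
        ⟨j, m, rfl, rfl⟩ <;> simp [parent]
  · rintro (⟨ht, rfl⟩ | ⟨ht, rfl⟩) <;> cases ‹TVert δ› <;> simp_all [parent]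

end TVert

theorem statement2_general (δ κ : ℕ) (C : GraphClass)
    (hideal : IsIdeal C)
    (hgood : ∀ (V : Type) (G : SimpleGraph V), C V G → GoodGraph δ κ G)
    (hunb : UnboundedChi C) :
    ∃ (C' : GraphClass) (c : ℕ),
      IsIdeal C' ∧ (∀ (V : Type) (G : SimpleGraph V), C' V G → C V G) ∧
      UnboundedChi C' ∧
      ∀ (V : Type) (G : SimpleGraph V), C' V G →
        ∀ X : Set V, MatchingCovered G X → (G.induce X).chromaticNumber ≤ (c : ℕ∞) := by
  by_cases h : ∃ c, UnboundedChi fun V G => C V G ∧ MatchingCoveredChiLe G c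
  · obtain ⟨c, hc⟩ := h
    exact ⟨_, c, hideal.and_matchingCoveredChiLe c, fun _ _ hG => hG.1, hc, fun _ _ hG => hG.2⟩
  simp only [UnboundedChi, not_exists, not_forall, not_and, not_lt] at h
  choose bnd hbnd using h
  obtain ⟨rank, hrank, hmono⟩ := Finite.exists_injective_nat_lt_of_lt (TVert.height (δ := δ))
  obtain ⟨V, G, hG, hχ⟩ := hunb (bnd^[rank .handle] 0)
  obtain ⟨S, -, hS, hne⟩ := exists_isMatchingCoveredChain hideal hbnd _ hG hχ
  have hT := nonempty_embedding_of_isMatchingCoveredChain (fun _ _ => TVert.tGraph_adj_iff) hrank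
    (fun t ht => hmono _ _ (t.height_lt_height_parent ht))
    (fun t ht => hmono _ _ (t.height_lt_height_handle ht)) hS hne
  exact (hgood V G hG).1.elim' hT.some

/-- if 𝒞 is an ideal of (δ,κ)-good graphs with unbounded chromatic number,
then there is a subideal 𝒞' with unbounded chromatic number and a number c such that every
matching-covered set in every member of 𝒞' has chromatic number at most c. -/
theorem statement2 (δ κ : ℕ) (hδ : 1 ≤ δ) (hκ : 1 ≤ κ) (C : GraphClass)
    (hideal : IsIdeal C)
    (hgood : ∀ (V : Type) (G : SimpleGraph V), C V G → GoodGraph δ κ G)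
    (hunb : UnboundedChi C) :
    ∃ (C' : GraphClass) (c : ℕ),
      IsIdeal C' ∧ (∀ (V : Type) (G : SimpleGraph V), C' V G → C V G) ∧
      UnboundedChi C' ∧
      ∀ (V : Type) (G : SimpleGraph V), C' V G →
        ∀ X : Set V, MatchingCovered G X → (G.induce X).chromaticNumber ≤ (c : ℕ∞) :=
  statement2_general δ κ C hideal hgood hunb
end

section
/- Let G satisfy conditions (i)–(v), and let Y be a (ζ,β)-core in G. Then there are at most ατ·2^{βζ} vertices of G that are dense to Y. -/
/-! If there were more than `ατ·2^(βζ)` vertices dense to `Y`, then by pigeonhole more than `ατ`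
of them would have the same neighbourhood `T` in `Y`. They share a neighbour `y ∈ T`, so they all
lie in `N²[y]`, and a `τ`-colouring of that ball gives `α` pairwise non-adjacent ones among them.
Together with `α` vertices of `T` in each part of `Y`, these form an `(α, β + 1)`-core,
contradicting (v). -/

namespace Set

variable {ι α : Type*}

theorem exists_lt_encard_fiber_of_mul_lt_encard [DecidableEq α] {s : Set ι} {t : Finset α}
    {f : ι → α} (hf : MapsTo f s t) {n : ℕ} (h : ((t.card * n : ℕ) : ℕ∞) < s.encard) :
    ∃ y ∈ t, (n : ℕ∞) < {x ∈ s | f x = y}.encard := by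
  obtain ⟨s', hs's, hs'⟩ := exists_subset_encard_eq (Order.add_one_le_of_lt h)
  have hs'fin : s'.Finite := finite_of_encard_eq_coe hs'
  have hcard : t.card * n < hs'fin.toFinset.card := by
    rw [hs'fin.encard_eq_coe_toFinset_card] at hs'
    exact_mod_cast hs'.ge
  obtain ⟨y, hyt, hy⟩ := Finset.exists_lt_card_fiber_of_mul_lt_card_of_maps_to
    (fun x hx ↦ hf (hs's (hs'fin.mem_toFinset.1 hx))) hcard
  refine ⟨y, hyt, ?_⟩
  calc (n : ℕ∞) < ({x ∈ hs'fin.toFinset | f x = y}.card : ℕ) := by exact_mod_cast hy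
    _ = (↑{x ∈ hs'fin.toFinset | f x = y} : Set ι).encard :=
      (encard_coe_eq_coe_finsetCard _).symm
    _ ≤ _ := encard_mono fun x hx ↦ by
      simp only [Finset.coe_filter, Finite.mem_toFinset] at hx
      exact ⟨hs's hx.1, hx.2⟩

theorem exists_lt_encard_inter_fiber {Y : Set α} {m n : ℕ} (hY : Y.encard ≤ m) {D : Set ι}
    (g : ι → Set α) (h : ((2 ^ m * n : ℕ) : ℕ∞) < D.encard) :
    ∃ T, (n : ℕ∞) < {x ∈ D | Y ∩ g x = T}.encard := by
  classical
  have hYfin : Y.Finite := finite_of_encard_le_coe hY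
  set Yf := hYfin.toFinset
  have hcard : ((Yf.powerset.card * n : ℕ) : ℕ∞) < D.encard := by
    refine lt_of_le_of_lt ?_ h
    have hm : Yf.card ≤ m := by
      rw [hYfin.encard_eq_coe_toFinset_card] at hY
      exact_mod_cast hY
    rw [Finset.card_powerset]
    exact_mod_cast Nat.mul_le_mul_right n (Nat.pow_le_pow_right two_pos hm)
  obtain ⟨T, -, hfiber⟩ :=
    exists_lt_encard_fiber_of_mul_lt_encard (f := fun x ↦ Yf.filter (· ∈ g x))
    (fun x _ ↦ Finset.mem_coe.2 (Finset.mem_powerset.2 (Finset.filter_subset _ Yf))) hcard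
  refine ⟨T, lt_of_lt_of_le hfiber (encard_mono ?_)⟩
  rintro x ⟨hxD, rfl⟩
  refine ⟨hxD, ?_⟩
  ext y
  simp [Yf]

end Set

theorem Fin.snoc_pairwise {α : Type*} {n : ℕ} {r : α → α → Prop}
    (hr : ∀ a b, r a b → r b a) {f : Fin n → α} {x : α}
    (hf : ∀ i j, i ≠ j → r (f i) (f j)) (hx : ∀ i, r (f i) x) :
    ∀ i j, i ≠ j →
      r (Fin.snoc (α := fun _ ↦ α) f x i) (Fin.snoc (α := fun _ ↦ α) f x j) := by
  intro i j hij
  induction i using Fin.lastCases <;> induction j using Fin.lastCases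
  · exact absurd rfl hij
  · simpa using hr _ _ (hx _)
  · simpa using hx _
  · simpa using hf _ _ (fun h ↦ hij (congrArg _ h))

section Cores

variable {V : Type} {G : SimpleGraph V}

theorem exists_stable_subset_of_colorable {s : Set V} {k a : ℕ} (hs : (G.induce s).Colorable k)
    (h : ((k * a : ℕ) : ℕ∞) < s.encard) :
    ∃ t ⊆ s, t.encard = a ∧ ∀ x ∈ t, ∀ y ∈ t, ¬ G.Adj x y := by
  obtain ⟨C⟩ := hs
  have huniv : ((Finset.univ : Finset (Fin k)).card * a : ℕ) < (Set.univ : Set s).encard := by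
    simpa only [Finset.card_univ, Fintype.card_fin, Set.encard_univ, ENat.card_coe_set_eq]
  obtain ⟨c, -, hc⟩ := Set.exists_lt_encard_fiber_of_mul_lt_encard
    (fun x _ ↦ Finset.mem_coe.2 (Finset.mem_univ (C x))) huniv
  obtain ⟨t, hts, ht⟩ := Set.exists_subset_encard_eq hc.le
  refine ⟨Subtype.val '' t, by simp, by rw [Subtype.val_injective.encard_image, ht], ?_⟩
  rintro _ ⟨x, hx, rfl⟩ _ ⟨y, hy, rfl⟩ hxy
  exact C.valid (G := G.induce s) hxy ((hts hx).2.trans (hts hy).2.symm)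

theorem IsCoreParts.encard_iUnion_le {a b : ℕ} {A : Fin b → Set V} (hA : IsCoreParts G a A) :
    (⋃ i, A i).encard ≤ (b * a : ℕ) := by
  calc (⋃ i, A i).encard ≤ ∑ i, (A i).encard := Set.encard_iUnion_le_of_fintype A
    _ = (b * a : ℕ) := by simp [hA.1]

theorem IsCoreParts.of_subset {a a' b : ℕ} {A B : Fin b → Set V} (hA : IsCoreParts G a A)
    (hBA : ∀ i, B i ⊆ A i) (hB : ∀ i, (B i).encard = a') : IsCoreParts G a' B :=
  ⟨hB, fun i j hij ↦ (hA.2.1 i j hij).mono (hBA i) (hBA j),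
    fun i x hx y hy ↦ hA.2.2.1 i x (hBA i hx) y (hBA i hy),
    fun i j hij x hx y hy ↦ hA.2.2.2 i j hij x (hBA i hx) y (hBA j hy)⟩

theorem IsCoreParts.snoc {a b : ℕ} {A : Fin b → Set V} {S : Set V} (hA : IsCoreParts G a A)
    (hS : S.encard = a) (hSstable : ∀ x ∈ S, ∀ y ∈ S, ¬ G.Adj x y)
    (hSdisj : ∀ i, Disjoint (A i) S) (hScomplete : ∀ i, ∀ x ∈ A i, ∀ y ∈ S, G.Adj x y) :
    IsCoreParts G a (Fin.snoc (α := fun _ ↦ Set V) A S) :=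
  ⟨Fin.lastCases (by simpa using hS) (by simpa using hA.1),
    Fin.snoc_pairwise (fun _ _ h ↦ h.symm) hA.2.1 hSdisj,
    Fin.lastCases (by simpa using hSstable) (by simpa using hA.2.2.1),
    Fin.snoc_pairwise (r := fun X Y ↦ ∀ x ∈ X, ∀ y ∈ Y, G.Adj x y)
      (fun _ _ h y hy x hx ↦ (h x hx y hy).symm) hA.2.2.2 hScomplete⟩

theorem IsCoreParts.hasCore_succ {a b c : ℕ} {A : Fin b → Set V} (hA : IsCoreParts G a A)
    {S T : Set V} (hS : S.encard = c) (hSstable : ∀ x ∈ S, ∀ y ∈ S, ¬ G.Adj x y)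
    (hSA : ∀ i, Disjoint (A i) S) (hT : ∀ i, (c : ℕ∞) ≤ (A i ∩ T).encard)
    (hST : ∀ x ∈ S, ∀ y ∈ T, G.Adj x y) : HasCore G c (b + 1) := by
  choose B hBAT hB using fun i ↦ Set.exists_subset_encard_eq (hT i)
  have hBA : ∀ i, B i ⊆ A i := fun i ↦ (hBAT i).trans Set.inter_subset_left
  exact ⟨_, (hA.of_subset hBA hB).snoc hS hSstable (fun i ↦ (hSA i).mono_left (hBA i))
    fun i x hx y hy ↦ (hST y hy x (hBAT i hx).2).symm⟩

end Cores

theorem statement6_general (τ α δ β ζ : ℕ) (hα : 1 ≤ α) (hβ : 2 ≤ β)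
    (θ : ℕ → ℕ)
    (V : Type) (G : SimpleGraph V) (hG : Conditions τ α δ β θ G)
    (A : Fin β → Set V) (hA : IsCoreParts G ζ A) :
    {v : V | DenseTo G α A v}.encard ≤ ((α * τ * 2 ^ (β * ζ) : ℕ) : ℕ∞) := by
  obtain ⟨-, hChi, -, -, hNoCore⟩ := hG
  by_contra! hD
  rw [mul_comm] at hD
  obtain ⟨T, hX⟩ := Set.exists_lt_encard_inter_fiber hA.encard_iUnion_le G.neighborSet hD
  set X := {v ∈ {v | DenseTo G α A v} | (⋃ i, A i) ∩ G.neighborSet v = T}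
  obtain ⟨v, hvD, hvT⟩ : X.Nonempty := Set.encard_pos.1 (pos_of_gt hX)
  have hT : ∀ i, (α : ℕ∞) ≤ (A i ∩ T).encard := fun i ↦ hvT ▸
    (hvD.2 i).trans (Set.encard_mono fun y hy ↦ ⟨hy.1, Set.mem_iUnion_of_mem i hy.1, hy.2⟩)
  have hXT : ∀ x ∈ X, ∀ z ∈ T, G.Adj x z := by
    rintro x ⟨-, rfl⟩ z hz
    exact hz.2
  obtain ⟨y, -, hy⟩ : (A ⟨0, by omega⟩ ∩ T).Nonempty :=
    Set.encard_pos.1 ((by exact_mod_cast hα : (0 : ℕ∞) < α).trans_le (hT _))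
  have hXy : X ⊆ Ball2 G y := fun x hx ↦ Or.inr (Or.inl (hXT x hx y hy).symm)
  obtain ⟨S, hSX, hS, hSstable⟩ := exists_stable_subset_of_colorable
    ((SimpleGraph.chromaticNumber_le_iff_colorable.1 (hChi y)).of_hom (G.induceHomOfLE hXy).toHom)
    (by rwa [mul_comm])
  exact hNoCore (hA.hasCore_succ hS hSstable
    (fun i ↦ Set.disjoint_right.2 fun x hx hxA ↦ (hSX hx).1.1 (Set.mem_iUnion_of_mem i hxA))
    hT fun x hx ↦ hXT x (hSX hx))

/-- if G satisfies (i)–(v) and Y is a (ζ,β)-core in G (with parts `A`), then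
there are at most α·τ·2^(βζ) vertices of G dense to Y. -/
theorem statement6 (τ α δ β ζ : ℕ) (hα : 1 ≤ α) (hδ : 1 ≤ δ) (hβ : 2 ≤ β)
    (θ : ℕ → ℕ) (hθ : Monotone θ)
    (V : Type) (G : SimpleGraph V) (hG : Conditions τ α δ β θ G)
    (A : Fin β → Set V) (hA : IsCoreParts G ζ A) :
    {v : V | DenseTo G α A v}.encard ≤ ((α * τ * 2 ^ (β * ζ) : ℕ) : ℕ∞) :=
  statement6_general τ α δ β ζ hα hβ θ V G hG A hA
end

section
/- Let η ≥ 1 and ζ ≥ max(η+δ, α) be integers, and let G satisfy conditions (i)–(v). Let 𝒯 be a 1-cleaned (ζ,η)-template array in G with sequence (Y_i,H_i) (1 ≤ i ≤ n). Then for each v ∈ V(𝒯) there are at most 2δ values of i ∈ {1,…,n} such that v has a neighbour in Y_i. -/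
/-! Suppose `v` has a neighbour in `Y_i` for more than `2δ` indices `i`. For all these `i` except
possibly the index `j` with `v ∈ H_j`, the template order gives `v ∉ Y_i`, and `v`, being neither
dense to nor mixed on `Y_i`, has fewer than `η` neighbours in each part of `Y_i`, hence, as
`ζ ≥ η + δ`, at least `δ + 1` non-neighbours in each part. In such a core, a neighbour `y` of `v` in
a part `A_k` and `δ` non-neighbours of `v` in another part `A_l` span a `(1,δ)`-broom with handle
`v`; and `y`, a non-neighbour `z ∈ A_l` and `δ` non-neighbours of `v` in `A_k` span a
`(2,δ)`-broom. Cores of distinct templates are disjoint and anticomplete, so `δ` brooms of each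
kind form an induced `T(δ)`, contradicting (i). -/

open Function

theorem Set.exists_injective_of_card_le_encard {ι X : Type*} [Fintype ι] {s : Set X}
    (h : (Fintype.card ι : ℕ∞) ≤ s.encard) : ∃ f : ι → X, Injective f ∧ ∀ i, f i ∈ s := by
  rw [Set.encard, ENat.card, Cardinal.natCast_le_toENat] at h
  have h' : Cardinal.lift.{u_2} (Cardinal.mk ι) ≤ Cardinal.lift.{u_1} (Cardinal.mk s) := by
    simpa using h
  obtain ⟨f⟩ := Cardinal.lift_mk_le'.1 h'
  exact ⟨(↑) ∘ f, Subtype.val_injective.comp f.injective, fun i => (f i).2⟩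

theorem Set.add_one_le_encard_sdiff_of_encard_inter_lt {X : Type*} {A N : Set X} {η δ ζ : ℕ}
    (hA : A.encard = ζ) (hAN : (A ∩ N).encard < η) (hζ : η + δ ≤ ζ) :
    (δ + 1 : ℕ∞) ≤ (A \ N).encard := by
  have hsum := Set.encard_sdiff_add_encard_inter A N
  rw [hA] at hsum
  have hfin : (A \ N).encard ≠ ⊤ := fun h => by simp [h] at hsum
  lift (A ∩ N).encard to ℕ using hAN.ne_top with a
  lift (A \ N).encard to ℕ using hfin with b
  norm_cast at *
  omega

namespace TVert

variable {δ : ℕ}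

/- Deleting the handle from `T(δ)` leaves `2δ` stars, `stem1 i` joined to the `leaf1 i _` and
`end2 j` joined to `stem2 j` and the `leaf2 j _`; `branch` names the star of a vertex and `side`
its side of the star's bipartition. -/

def branch : TVert δ → Option (Fin δ ⊕ Fin δ)
  | handle => none
  | stem1 i | leaf1 i _ => some (.inl i)
  | stem2 j | end2 j | leaf2 j _ => some (.inr j)

def side : TVert δ → Bool
  | leaf1 _ _ | end2 _ => true
  | _ => false

def isStem : TVert δ → Bool
  | stem1 _ | stem2 _ => true
  | _ => false

theorem eq_handle_of_branch_eq_none {a : TVert δ} (ha : a.branch = none) : a = handle := by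
  cases a <;> simp_all [branch]

def realize {V : Type*} (v : V) (y : Fin δ ⊕ Fin δ → V)
    (g : Fin δ ⊕ Fin δ → Bool → Fin (δ + 1) → V) : TVert δ → V
  | handle => v
  | stem1 i => y (.inl i)
  | leaf1 i k => g (.inl i) true k.succ
  | stem2 j => y (.inr j)
  | end2 j => g (.inr j) true 0
  | leaf2 j k => g (.inr j) false k.succ

theorem realize_mem_and_adj_iff {V : Type*} {G : SimpleGraph V}
    {P : Fin δ ⊕ Fin δ → Bool → Set V} {v : V} {y : Fin δ ⊕ Fin δ → V}
    {g : Fin δ ⊕ Fin δ → Bool → Fin (δ + 1) → V}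
    (hyP : ∀ m, y m ∈ P m false) (hyv : ∀ m, G.Adj v (y m))
    (hgP : ∀ m s i, g m s i ∈ P m s \ G.neighborSet v) {a : TVert δ} {m : Fin δ ⊕ Fin δ}
    (ha : a.branch = some m) :
    a.realize v y g ∈ P m a.side ∧ (G.Adj v (a.realize v y g) ↔ a.isStem) := by
  have hgv : ∀ m s i, ¬ G.Adj v (g m s i) := fun m s i => (hgP m s i).2
  cases a <;> simp only [branch, Option.some.injEq, reduceCtorEq] at ha <;> subst ha <;>
    simp [realize, side, isStem, hyP, hyv, (hgP _ _ _).1, hgv]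

end TVert

theorem TGraph_adj_handle_iff {δ : ℕ} (b : TVert δ) :
    (TGraph δ).Adj .handle b ↔ b.isStem := by
  cases b <;> simp [TGraph, TVert.isStem]

theorem TGraph_adj_iff_of_branch {δ : ℕ} {a b : TVert δ} {m m' : Fin δ ⊕ Fin δ}
    (ha : a.branch = some m) (hb : b.branch = some m') :
    (TGraph δ).Adj a b ↔ m = m' ∧ a.side ≠ b.side := by
  cases a <;> cases b <;> simp [TVert.branch] at ha hb <;> subst ha hb <;>
    simp [TGraph, TVert.side, eq_comm]

theorem nonempty_embedding_TGraph_of_parts {V : Type*} {G : SimpleGraph V} {δ : ℕ} (v : V)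
    (P : Fin δ ⊕ Fin δ → Bool → Set V)
    (hadj : ∀ m s m' s', ∀ x ∈ P m s, ∀ x' ∈ P m' s', G.Adj x x' ↔ m = m' ∧ s ≠ s')
    (hdisj : ∀ m s m' s', ∀ x ∈ P m s, x ∈ P m' s' → m = m' ∧ s = s')
    (hv : ∀ m s, v ∉ P m s)
    (hnbr : ∀ m, ∃ y ∈ P m false, G.Adj v y)
    (hnonnbr : ∀ m s, (δ + 1 : ℕ∞) ≤ (P m s \ G.neighborSet v).encard) :
    Nonempty (TGraph δ ↪g G) := by
  choose y hyP hyv using hnbr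
  choose g hg hgP using fun m s => Set.exists_injective_of_card_le_encard
    (ι := Fin (δ + 1)) (s := P m s \ G.neighborSet v) (by simpa using hnonnbr m s)
  set F := TVert.realize v y g
  have hF : ∀ a m, a.branch = some m → F a ∈ P m a.side ∧ (G.Adj v (F a) ↔ a.isStem) :=
    fun a m => TVert.realize_mem_and_adj_iff hyP hyv hgP
  have hv' : ∀ b m, b.branch = some m → F .handle ≠ F b := fun b m hb h =>
    hv m b.side (by rw [show v = F b from h]; exact (hF b m hb).1)
  have hinj : Injective F := by
    intro a b hab
    rcases ha : a.branch with _ | m <;> rcases hb : b.branch with _ | m'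
    · rw [TVert.eq_handle_of_branch_eq_none ha, TVert.eq_handle_of_branch_eq_none hb]
    · obtain rfl := TVert.eq_handle_of_branch_eq_none ha
      exact absurd hab (hv' b m' hb)
    · obtain rfl := TVert.eq_handle_of_branch_eq_none hb
      exact absurd hab.symm (hv' a m ha)
    · obtain ⟨rfl, hside⟩ := hdisj _ _ _ _ _ (hF a m ha).1 (hab ▸ (hF b m' hb).1)
      have hstem : a.isStem = b.isStem :=
        Bool.eq_iff_iff.2 ((hF a m ha).2.symm.trans (hab ▸ (hF b m hb).2))
      have hbr : a.branch = b.branch := ha.trans hb.symm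
      cases a <;> cases b <;> simp only [TVert.branch, TVert.side, TVert.isStem,
        Option.some.injEq, Sum.inl.injEq, Sum.inr.injEq, reduceCtorEq, Bool.false_eq_true,
        Bool.true_eq_false]
        at hbr hside hstem ⊢ <;> subst hbr
      all_goals first | rfl | simpa [F, TVert.realize, (hg _ _).eq_iff] using hab
  refine ⟨⟨F, hinj⟩, fun {a b} => ?_⟩
  rcases ha : a.branch with _ | m <;> rcases hb : b.branch with _ | m'
  · rw [TVert.eq_handle_of_branch_eq_none ha, TVert.eq_handle_of_branch_eq_none hb]
    exact iff_of_false G.irrefl (TGraph δ).irrefl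
  · rw [TVert.eq_handle_of_branch_eq_none ha, TGraph_adj_handle_iff]
    exact (hF b m' hb).2
  · rw [TVert.eq_handle_of_branch_eq_none hb, G.adj_comm, (TGraph δ).adj_comm,
      TGraph_adj_handle_iff]
    exact (hF a m ha).2
  · rw [TGraph_adj_iff_of_branch ha hb]
    exact hadj _ _ _ _ _ (hF a m ha).1 _ (hF b m' hb).1

theorem IsCoreParts.adj_iff {V : Type} {G : SimpleGraph V} {a b : ℕ} {A : Fin b → Set V}
    (hA : IsCoreParts G a A) {p q : Fin b} {x y : V} (hx : x ∈ A p) (hy : y ∈ A q) :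
    G.Adj x y ↔ p ≠ q := by
  refine ⟨fun hxy hpq => hA.2.2.1 p x hx y (hpq ▸ hy) hxy, fun hpq => hA.2.2.2 p q hpq x hx y hy⟩

theorem IsCoreParts.eq_of_mem {V : Type} {G : SimpleGraph V} {a b : ℕ} {A : Fin b → Set V}
    (hA : IsCoreParts G a A) {p q : Fin b} {x : V} (hp : x ∈ A p) (hq : x ∈ A q) : p = q := by
  by_contra hpq
  exact Set.disjoint_left.1 (hA.2.1 p q hpq) hp hq

theorem encard_inter_neighborSet_lt_of_not_mixedOn {V : Type} {G : SimpleGraph V} {α η b : ℕ}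
    {A : Fin b → Set V} {v : V} (hd : ¬ DenseTo G α A v) (hm : ¬ MixedOn G α η A v) (p : Fin b) :
    (A p ∩ G.neighborSet v).encard < η :=
  lt_of_not_ge fun h => hm ⟨hd, p, h⟩

namespace TemplateArray

variable {V : Type} {G : SimpleGraph V} {α β ζ η n : ℕ} (T : TemplateArray G α β ζ η n)

theorem eq_of_mem_Y {i j : Fin n} {x : V} (hi : x ∈ T.Y i) (hj : x ∈ T.Y j) : i = j := by
  by_contra hij
  exact Set.disjoint_left.1 (T.H_disj i j hij) (T.core_subset i hi) (T.core_subset j hj)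

theorem not_adj_of_mem_Y {i j : Fin n} (hij : i ≠ j) {x y : V} (hx : x ∈ T.Y i) (hy : y ∈ T.Y j) :
    ¬ G.Adj x y := by
  rcases hij.lt_or_gt with h | h
  · exact T.no_edge i j h x (T.core_subset i hx) y hy
  · exact fun hxy => T.no_edge j i h y (T.core_subset j hy) x hx hxy.symm

theorem exists_subsingleton_sparse_of_adj (hT : T.Cleaned1) {v : V} (hv : v ∈ T.Vall) :
    ∃ J : Set (Fin n), J.Subsingleton ∧ ∀ i ∉ J, (∃ y ∈ T.Y i, G.Adj v y) →
      v ∉ T.Y i ∧ ∀ p, (T.A i p ∩ G.neighborSet v).encard < η := by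
  rcases hv with hvH | hvU
  · obtain ⟨_, ⟨j, rfl⟩, hvj⟩ := hvH
    refine ⟨{j}, Set.subsingleton_singleton, fun i hi ⟨y, hy, hvy⟩ => ?_⟩
    have hij : i < j :=
      (Ne.lt_or_gt hi).resolve_right fun hji => T.no_edge j i hji v hvj y hy hvy
    exact ⟨fun hvi => (T.H_disj i j hij.ne).ne_of_mem (T.core_subset i hvi) hvj rfl,
      encard_inter_neighborSet_lt_of_not_mixedOn (hT i v (Or.inl (Set.mem_iUnion.2 ⟨j, hvj⟩)))
        (T.not_mixed i j hij v hvj)⟩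
  · exact ⟨∅, Set.subsingleton_empty, fun i _ _ =>
      ⟨fun hvi => T.U_not_H v hvU i (T.core_subset i hvi),
      encard_inter_neighborSet_lt_of_not_mixedOn (hT i v (Or.inr hvU)) (T.U_not_mixed v hvU i)⟩⟩

theorem nonempty_embedding_TGraph {δ : ℕ} (hβ : 2 ≤ β) (hζ : η + δ ≤ ζ) {v : V}
    {e : Fin δ ⊕ Fin δ → Fin n} (he : Injective e) (hnbr : ∀ m, ∃ y ∈ T.Y (e m), G.Adj v y)
    (hout : ∀ m, v ∉ T.Y (e m)) (hfew : ∀ m p, (T.A (e m) p ∩ G.neighborSet v).encard < η) :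
    Nonempty (TGraph δ ↪g G) := by
  have : Nontrivial (Fin β) := Fin.nontrivial_iff_two_le.2 hβ
  have hnbr' : ∀ m, ∃ k, ∃ y ∈ T.A (e m) k, G.Adj v y := fun m => by
    obtain ⟨y, hy, hvy⟩ := hnbr m
    obtain ⟨k, hk⟩ := Set.mem_iUnion.1 hy
    exact ⟨k, y, hk, hvy⟩
  choose k y hyk hvy using hnbr'
  choose l hlk using fun m => exists_ne (k m)
  have hpart : ∀ m (s s' : Bool),
      (if s then l m else k m) = (if s' then l m else k m) ↔ s = s' := by
    intro m s s'
    cases s <;> cases s' <;> simp [hlk m, (hlk m).symm]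
  refine nonempty_embedding_TGraph_of_parts v (fun m s => T.A (e m) (if s then l m else k m))
    ?_ ?_ ?_ ?_ ?_
  · intro m s m' s' x hx x' hx'
    by_cases hm : m = m'
    · subst hm
      rw [(T.core (e m)).adj_iff hx hx', Ne, hpart]
      simp
    · exact iff_of_false (T.not_adj_of_mem_Y (he.ne hm) (Set.mem_iUnion.2 ⟨_, hx⟩)
        (Set.mem_iUnion.2 ⟨_, hx'⟩)) fun h => hm h.1
  · intro m s m' s' x hx hx'
    obtain rfl := he (T.eq_of_mem_Y (Set.mem_iUnion.2 ⟨_, hx⟩) (Set.mem_iUnion.2 ⟨_, hx'⟩))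
    exact ⟨rfl, (hpart m s s').1 ((T.core (e m)).eq_of_mem hx hx')⟩
  · exact fun m s hv => hout m (Set.mem_iUnion.2 ⟨_, hv⟩)
  · exact fun m => ⟨y m, hyk m, hvy m⟩
  · exact fun m s =>
      Set.add_one_le_encard_sdiff_of_encard_inter_lt ((T.core (e m)).1 _) (hfew m _) hζ

end TemplateArray

theorem statement9_general (τ α δ β ζ η : ℕ) (hβ : 2 ≤ β)
    (θ : ℕ → ℕ) (hζ : max (η + δ) α ≤ ζ)
    (V : Type) (G : SimpleGraph V) (hG : Conditions τ α δ β θ G)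
    (n : ℕ) (T : TemplateArray G α β ζ η n) (hT : T.Cleaned1)
    (v : V) (hv : v ∈ T.Vall) :
    {i : Fin n | ∃ y ∈ T.Y i, G.Adj v y}.encard ≤ ((2 * δ : ℕ) : ℕ∞) := by
  set S := {i : Fin n | ∃ y ∈ T.Y i, G.Adj v y}
  by_contra! hS
  obtain ⟨J, hJ, hsparse⟩ := T.exists_subsingleton_sparse_of_adj hT hv
  have hcard : (Fintype.card (Fin δ ⊕ Fin δ) : ℕ∞) ≤ (S \ J).encard := by
    have : S.encard ≤ (S \ J).encard + 1 := calc
      S.encard ≤ (S \ J ∪ J).encard := Set.encard_le_encard (Set.subset_sdiff_union S J)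
      _ ≤ (S \ J).encard + J.encard := Set.encard_union_le _ _
      _ ≤ (S \ J).encard + 1 := by gcongr; exact Set.encard_le_one_iff_subsingleton.2 hJ
    rw [Fintype.card_sum, Fintype.card_fin, ← two_mul]
    exact (ENat.lt_add_one_iff' (ENat.natCast_ne_top _)).1 (hS.trans_le this)
  obtain ⟨e, he, hmem⟩ := Set.exists_injective_of_card_le_encard hcard
  have hsp := fun m => hsparse (e m) (hmem m).2 (hmem m).1
  exact hG.1.false (T.nonempty_embedding_TGraph hβ (le_of_max_le_left hζ) he
    (fun m => (hmem m).1) (fun m => (hsp m).1) (fun m => (hsp m).2)).some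

/-- for η ≥ 1, ζ ≥ max(η+δ,α), G satisfying (i)–(v), and a 1-cleaned
(ζ,η)-template array 𝒯 in G, each v ∈ V(𝒯) has a neighbour in Y_i for at most 2δ values
of i. -/
theorem statement9 (τ α δ β ζ η : ℕ) (hα : 1 ≤ α) (hδ : 1 ≤ δ) (hβ : 2 ≤ β)
    (θ : ℕ → ℕ) (hθ : Monotone θ) (hη : 1 ≤ η) (hζ : max (η + δ) α ≤ ζ)
    (V : Type) (G : SimpleGraph V) (hG : Conditions τ α δ β θ G)
    (n : ℕ) (T : TemplateArray G α β ζ η n) (hT : T.Cleaned1)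
    (v : V) (hv : v ∈ T.Vall) :
    {i : Fin n | ∃ y ∈ T.Y i, G.Adj v y}.encard ≤ ((2 * δ : ℕ) : ℕ∞) :=
  statement9_general τ α δ β ζ η hβ θ hζ V G hG n T hT v hv
end

section
/- Let η ≥ 1 and ζ ≥ max(η,α), and let q, s ≥ 0. Let G satisfy conditions (i)–(v), and let 𝒯 be a 2-cleaned (ζ,η)-template array in G with sequence (Y_i,H_i) (1 ≤ i ≤ n) that admits a privatization Π. Let B_1,…,B_n be a shadowing of 𝒯 of degree at most s relative to U(𝒯)\Π. Let 1 ≤ i ≤ n, and let {D_j : j ∈ J} be a bunch of daisies, each with root in H_i and with V(D_j) ∩ Π = ∅, with |J| = 2qζβ(1+(q+s)(δ²+1)+2δ+δτ)τ. Then there exist a vertex u ∈ H_i ∪ B_i and J' ⊆ J with |J'| = q such that for each j ∈ J', u is adjacent to the eye of D_j and nonadjacent to the petals of D_j. -/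
/-!
Suppose no vertex of `H_i ∪ B_i` is adjacent to the eyes but to none of the petals of `q`
daisies. Petals lie in `U(𝒯) \ Π`, where the shadowing has degree at most `s`, so every such
vertex is then adjacent to the eye or a petal of fewer than `q + s` daisies. Thinning the bunch
(dropping daisies rooted in `Y_i`, pigeonholing a vertex `y ∈ Y_i` adjacent to many roots,
keeping one colour class of `N²[y]`, and taking an independent set of the digraph "the root of
`j` sees the eye of `j'`") leaves `1 + (q+s)(δ²+1) + 2δ + δτ` daisies whose roots lie in `Z(𝒯)`,
are pairwise nonadjacent and adjacent to `y`. For `δ` of them, choose `δ` private neighbours of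
each root in one common colour of `N²[y]`: these lie in `B_i` and are pairwise nonadjacent.
Counting once more, `δ` further daisies avoid `y` and all these leaves. Then `y`, the first `δ`
roots with their private leaves, and the other `δ` daisies induce a copy of `T(δ)`,
contradicting (i).
-/

open Finset
open scoped Classical

namespace Finset

variable {ι κ : Type*}

theorem exists_card_le_mul_card_filter (S : Finset ι) {t : Finset κ} (ht : t.Nonempty)
    (R : ι → κ → Prop) [DecidableRel R] (h : ∀ j ∈ S, ∃ y ∈ t, R j y) :
    ∃ y ∈ t, #S ≤ #t * #{j ∈ S | R j y} := by
  obtain ⟨y, hy, hmax⟩ := t.exists_max_image (fun y => #{j ∈ S | R j y}) ht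
  refine ⟨y, hy, ?_⟩
  calc #S ≤ #(t.biUnion fun y => {j ∈ S | R j y}) := card_le_card fun j hj => by
          obtain ⟨y', hy', hR⟩ := h j hj
          exact mem_biUnion.2 ⟨y', hy', mem_filter.2 ⟨hj, hR⟩⟩
    _ ≤ ∑ y ∈ t, #{j ∈ S | R j y} := card_biUnion_le
    _ ≤ #t * #{j ∈ S | R j y} := by simpa using sum_le_card_nsmul t _ _ hmax

theorem card_le_card_filter_forall_not_add (S : Finset ι) (W : Finset κ) (R : κ → ι → Prop)
    [DecidableRel R] {d : ℕ} (h : ∀ w ∈ W, #{j ∈ S | R w j} ≤ d) :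
    #S ≤ #{j ∈ S | ∀ w ∈ W, ¬ R w j} + #W * d := by
  calc #S ≤ #({j ∈ S | ∀ w ∈ W, ¬ R w j} ∪ W.biUnion fun w => {j ∈ S | R w j}) :=
        card_le_card fun j hj => by
          by_cases hj' : ∀ w ∈ W, ¬ R w j
          · exact mem_union_left _ (mem_filter.2 ⟨hj, hj'⟩)
          · push Not at hj'
            obtain ⟨w, hw, hR⟩ := hj'
            exact mem_union_right _ (mem_biUnion.2 ⟨w, hw, mem_filter.2 ⟨hj, hR⟩⟩)
    _ ≤ #{j ∈ S | ∀ w ∈ W, ¬ R w j} + ∑ w ∈ W, #{j ∈ S | R w j} :=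
        (card_union_le _ _).trans (Nat.add_le_add_left card_biUnion_le _)
    _ ≤ _ := Nat.add_le_add_left (by simpa using sum_le_card_nsmul W _ d h) _

theorem exists_mem_card_filter_rel_or_rel_le [DecidableEq ι] (r : ι → ι → Prop)
    [DecidableRel r] {d : ℕ} {S : Finset ι} (hS : S.Nonempty)
    (hout : ∀ a ∈ S, #{b ∈ S | a ≠ b ∧ r a b} ≤ d) :
    ∃ a ∈ S, #{b ∈ S | a ≠ b ∧ (r a b ∨ r b a)} ≤ 2 * d := by
  have hin : ∑ a ∈ S, #{b ∈ S | a ≠ b ∧ r b a} = ∑ a ∈ S, #{b ∈ S | a ≠ b ∧ r a b} := by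
    simpa only [bipartiteAbove, bipartiteBelow, ne_comm] using
      sum_card_bipartiteAbove_eq_sum_card_bipartiteBelow (s := S) (t := S)
        (r := fun a b => a ≠ b ∧ r b a)
  refine exists_le_of_sum_le hS ?_
  calc ∑ a ∈ S, #{b ∈ S | a ≠ b ∧ (r a b ∨ r b a)}
      ≤ ∑ a ∈ S, (#{b ∈ S | a ≠ b ∧ r a b} + #{b ∈ S | a ≠ b ∧ r b a}) :=
        sum_le_sum fun a _ => (card_union_le _ _).trans' <|
          card_le_card fun b => by simp only [mem_filter, mem_union]; tauto
    _ = 2 * ∑ a ∈ S, #{b ∈ S | a ≠ b ∧ r a b} := by rw [sum_add_distrib, hin, two_mul]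
    _ ≤ ∑ _a ∈ S, 2 * d := by rw [← mul_sum]; exact Nat.mul_le_mul_left _ (sum_le_sum hout)

/-- Greedy: by averaging some vertex has total degree at most `2d`; keep it and discard its
neighbours. -/
theorem exists_subset_pairwise_not_rel [DecidableEq ι] (r : ι → ι → Prop) [DecidableRel r]
    (d : ℕ) (S : Finset ι) (hout : ∀ a ∈ S, #{b ∈ S | a ≠ b ∧ r a b} ≤ d) :
    ∃ S' ⊆ S, #S ≤ (2 * d + 1) * #S' ∧ (S' : Set ι).Pairwise fun a b => ¬ r a b := by
  induction S using Finset.strongInduction with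
  | H S ih =>
  rcases S.eq_empty_or_nonempty with rfl | hne
  · exact ⟨∅, by simp⟩
  obtain ⟨a, ha, hdeg⟩ := exists_mem_card_filter_rel_or_rel_le r hne hout
  set N := {b ∈ S | a ≠ b ∧ (r a b ∨ r b a)}
  have hsub : S \ insert a N ⊂ S :=
    sdiff_ssubset (insert_subset ha (filter_subset _ _)) ⟨a, mem_insert_self a N⟩
  obtain ⟨S', hS', hcard, hpair⟩ := ih _ hsub fun b hb =>
    (card_le_card (filter_subset_filter _ sdiff_subset)).trans (hout b (mem_sdiff.1 hb).1)
  have haS' : a ∉ S' := fun h => (mem_sdiff.1 (hS' h)).2 (mem_insert_self a N)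
  refine ⟨insert a S', insert_subset ha (hS'.trans sdiff_subset), ?_, ?_⟩
  · calc #S ≤ #(S \ insert a N) + #(insert a N) := card_le_card_sdiff_add_card
      _ ≤ (2 * d + 1) * #S' + (2 * d + 1) :=
        Nat.add_le_add hcard ((card_insert_le a N).trans (by omega))
      _ = (2 * d + 1) * #(insert a S') := by rw [card_insert_of_notMem haS']; ring
  · rw [coe_insert, Set.pairwise_insert]
    refine ⟨hpair, fun b hb hab => ?_⟩
    have hbN : b ∉ N := fun h => (mem_sdiff.1 (hS' hb)).2 (mem_insert_of_mem h)
    simp only [N, mem_filter, not_and, not_or] at hbN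
    exact hbN (mem_sdiff.1 (hS' hb)).1 hab

theorem exists_monochromatic_subfamily {α : Type*} {τ δ : ℕ} (hτ : 0 < τ) (col : α → Fin τ)
    (C : Finset ι) (Q : ι → Finset α) (hC : τ * δ ≤ #C) (hQ : ∀ j ∈ C, τ * δ ≤ #(Q j)) :
    ∃ k : Fin τ, ∃ D ⊆ C, #D = δ ∧ ∀ j ∈ D, ∃ L ⊆ Q j, #L = δ ∧ ∀ x ∈ L, col x = k := by
  have : Nonempty (Fin τ) := ⟨⟨0, hτ⟩⟩
  have hne : (univ : Finset (Fin τ)).Nonempty := univ_nonempty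
  have hcol : ∀ j ∈ C, ∃ k, δ ≤ #{x ∈ Q j | col x = k} := fun j hj => by
    obtain ⟨k, -, hk⟩ := exists_le_card_fiber_of_mul_le_card_of_maps_to
      (fun x _ => mem_univ (col x)) hne (by simpa using hQ j hj)
    exact ⟨k, hk⟩
  choose! g hg using hcol
  obtain ⟨k, -, hk⟩ := exists_le_card_fiber_of_mul_le_card_of_maps_to (f := g)
    (fun j _ => mem_univ (g j)) hne (by simpa using hC)
  obtain ⟨D, hDC, hD⟩ := exists_subset_card_eq hk
  refine ⟨k, D, hDC.trans (filter_subset _ _), hD, fun j hj => ?_⟩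
  obtain ⟨hjC, hgj⟩ := mem_filter.1 (hDC hj)
  obtain ⟨L, hL, hLcard⟩ := exists_subset_card_eq (hg j hjC)
  exact ⟨L, hL.trans (filter_subset _ _), hLcard, fun x hx => (mem_filter.1 (hL hx)).2.trans hgj⟩

end Finset

theorem Set.exists_injective_fin_of_encard_eq {α : Type*} {s : Set α} {k : ℕ}
    (h : s.encard = k) : ∃ f : Fin k → α, Function.Injective f ∧ ∀ m, f m ∈ s := by
  have hs := Set.finite_of_encard_eq_coe h
  have hk : #hs.toFinset = k := by
    rw [← Nat.cast_inj (R := ℕ∞), ← hs.encard_eq_coe_toFinset_card, h]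
  let e := hs.toFinset.equivFinOfCardEq hk
  exact ⟨fun m => e.symm m, fun m m' hm => e.symm.injective (Subtype.ext hm),
    fun m => hs.mem_toFinset.1 (e.symm m).2⟩

theorem Finset.exists_injective_fin_of_card_eq {α : Type*} {s : Finset α} {k : ℕ}
    (h : #s = k) : ∃ f : Fin k → α, Function.Injective f ∧ ∀ m, f m ∈ s :=
  Set.exists_injective_fin_of_encard_eq (by simp [h])

theorem SimpleGraph.injective_of_adj_iff {W V : Type*} {H : SimpleGraph W} {G : SimpleGraph V}
    {f : W → V} (hf : ∀ x x', G.Adj (f x) (f x') ↔ H.Adj x x')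
    (htwin : ∀ x x', (∀ z, H.Adj z x ↔ H.Adj z x') → f x = f x' → x = x') :
    Function.Injective f :=
  fun x x' h => htwin x x' (fun z => by rw [← hf, ← hf, h]) h

namespace TGraph

variable {δ : ℕ}

theorem eq_or_siblings_of_forall_adj_iff {x x' : TVert δ}
    (h : ∀ z, (TGraph δ).Adj z x ↔ (TGraph δ).Adj z x') :
    x = x' ∨ (∃ t m m', x = .leaf1 t m ∧ x' = .leaf1 t m') ∨
      (∃ t m m', x = .leaf2 t m ∧ x' = .leaf2 t m') := by
  rcases x with _ | t | ⟨t, m⟩ | t | t | ⟨t, m⟩ <;>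
    rcases x' with _ | t' | ⟨t', m'⟩ | t' | t' | ⟨t', m'⟩
  -- Two vertices that are not leaves of a common broom are separated by one of these.
  all_goals first
    | case _ => have := h .handle; clear h; simp [TGraph] at this <;> simp_all
    | case _ => have := h (.stem1 t); clear h; simp [TGraph] at this <;> simp_all
    | case _ => have := h (.stem2 t); clear h; simp [TGraph] at this <;> simp_all
    | case _ => have := h (.end2 t); clear h; simp [TGraph] at this <;> simp_all
    | case _ => have := h (.leaf1 t t); clear h; simp [TGraph] at this <;> simp_all
    | case _ => have := h (.stem1 t'); clear h; simp [TGraph] at this <;> simp_all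
    | case _ => have := h (.stem2 t'); clear h; simp [TGraph] at this

def embed {V : Type*} (y : V) (a b e : Fin δ → V) (l1 l2 : Fin δ → Fin δ → V) : TVert δ → V
  | .handle => y
  | .stem1 t => a t
  | .leaf1 t m => l1 t m
  | .stem2 t => b t
  | .end2 t => e t
  | .leaf2 t m => l2 t m

theorem nonempty_embedding {V : Type*} (G : SimpleGraph V)
    (y : V) (a b e : Fin δ → V) (l1 l2 : Fin δ → Fin δ → V)
    (hya : ∀ t, G.Adj y (a t)) (hyb : ∀ t, G.Adj y (b t))
    (hyl1 : ∀ t m, ¬ G.Adj y (l1 t m)) (hye : ∀ t, ¬ G.Adj y (e t))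
    (hyl2 : ∀ t m, ¬ G.Adj y (l2 t m))
    (haa : ∀ t t', ¬ G.Adj (a t) (a t')) (hab : ∀ t t', ¬ G.Adj (a t) (b t'))
    (hbb : ∀ t t', ¬ G.Adj (b t) (b t'))
    (hal1 : ∀ t t' m, G.Adj (a t) (l1 t' m) ↔ t = t')
    (hae : ∀ t t', ¬ G.Adj (a t) (e t')) (hal2 : ∀ t t' m, ¬ G.Adj (a t) (l2 t' m))
    (hbl1 : ∀ t t' m, ¬ G.Adj (b t) (l1 t' m))
    (hbe : ∀ t t', G.Adj (b t) (e t') ↔ t = t') (hbl2 : ∀ t t' m, ¬ G.Adj (b t) (l2 t' m))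
    (hl1l1 : ∀ t m t' m', ¬ G.Adj (l1 t m) (l1 t' m'))
    (hel1 : ∀ t t' m, ¬ G.Adj (e t) (l1 t' m))
    (hl1l2 : ∀ t m t' m', ¬ G.Adj (l1 t m) (l2 t' m'))
    (hee : ∀ t t', ¬ G.Adj (e t) (e t')) (hel2 : ∀ t t' m, G.Adj (e t) (l2 t' m) ↔ t = t')
    (hl2l2 : ∀ t m t' m', ¬ G.Adj (l2 t m) (l2 t' m'))
    (hl1 : ∀ t, Function.Injective (l1 t)) (hl2 : ∀ t, Function.Injective (l2 t)) :
    Nonempty (SimpleGraph.Embedding (TGraph δ) G) := by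
  set f := embed y a b e l1 l2
  have hf : ∀ x x', G.Adj (f x) (f x') ↔ (TGraph δ).Adj x x' := by
    suffices ∀ x x', (G.Adj (f x) (f x') ↔ (TGraph δ).Adj x x') ∨
        (G.Adj (f x') (f x) ↔ (TGraph δ).Adj x' x) from fun x x' =>
      (this x x').elim id fun h => by rwa [G.adj_comm, (TGraph δ).adj_comm]
    rintro (_ | t | ⟨t, m⟩ | t | t | ⟨t, m⟩) (_ | t' | ⟨t', m'⟩ | t' | t' | ⟨t', m'⟩) <;>
      first
      | case _ => left; simp [f, embed, TGraph, eq_comm, *]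
      | case _ => right; simp [f, embed, TGraph, eq_comm, *]
  refine ⟨⟨⟨f, SimpleGraph.injective_of_adj_iff hf fun x x' htwin hxx' => ?_⟩, hf _ _⟩⟩
  rcases eq_or_siblings_of_forall_adj_iff htwin with
    rfl | ⟨t, m, m', rfl, rfl⟩ | ⟨t, m, m', rfl, rfl⟩
  · rfl
  · rw [hl1 t hxx']
  · rw [hl2 t hxx']

end TGraph

theorem ChiTwoLe.exists_coloring {V : Type} {G : SimpleGraph V} {τ : ℕ} (h : ChiTwoLe G τ)
    (y : V) : ∃ col : V → Fin τ,
      ∀ x ∈ Ball2 G y, ∀ x' ∈ Ball2 G y, G.Adj x x' → col x ≠ col x' := by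
  obtain ⟨C⟩ := SimpleGraph.chromaticNumber_le_iff_colorable.1 (h y)
  refine ⟨fun x => if hx : x ∈ Ball2 G y then C ⟨x, hx⟩ else C ⟨y, Or.inl rfl⟩,
    fun x hx x' hx' hxx' => ?_⟩
  simpa [hx, hx'] using C.valid (show (G.induce (Ball2 G y)).Adj ⟨x, hx⟩ ⟨x', hx'⟩ from hxx')

theorem ChiTwoLe.pos {V : Type} {G : SimpleGraph V} {τ : ℕ} (h : ChiTwoLe G τ) (y : V) :
    0 < τ :=
  (h.exists_coloring y).choose y |>.pos

theorem ChiTwoLe.exists_subset_forall_not_adj {V ι : Type} {G : SimpleGraph V} {τ : ℕ}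
    (h : ChiTwoLe G τ) {y : V} {u : ι → V} {S : Finset ι} (hS : ∀ j ∈ S, G.Adj y (u j)) :
    ∃ S' ⊆ S, #S ≤ τ * #S' ∧ ∀ j ∈ S', ∀ j' ∈ S', ¬ G.Adj (u j) (u j') := by
  obtain ⟨col, hcol⟩ := h.exists_coloring y
  have : Nonempty (Fin τ) := ⟨⟨0, h.pos y⟩⟩
  obtain ⟨k, -, hk⟩ := exists_card_le_mul_card_filter S univ_nonempty
    (fun j k => col (u j) = k) fun j _ => ⟨_, mem_univ _, rfl⟩
  refine ⟨_, filter_subset _ _, by simpa using hk, fun j hj j' hj' hadj => ?_⟩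
  rw [mem_filter] at hj hj'
  exact hcol _ (Or.inr (Or.inl (hS j hj.1))) _ (Or.inr (Or.inl (hS j' hj'.1))) hadj
    (hj.2.trans hj'.2.symm)

def SeesEyeOnly {V ι : Type} (G : SimpleGraph V) (v : ι → V) (P : ι → Set V) (w : V) (j : ι) :
    Prop :=
  G.Adj w (v j) ∧ ∀ p ∈ P j, ¬ G.Adj w p

def SeesDaisy {V ι : Type} (G : SimpleGraph V) (v : ι → V) (P : ι → Set V) (w : V) (j : ι) :
    Prop :=
  G.Adj w (v j) ∨ ∃ p ∈ P j, G.Adj w p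

namespace TemplateArray

variable {V : Type} {G : SimpleGraph V} {α β ζ η n : ℕ} (T : TemplateArray G α β ζ η n)

theorem exists_finset_Y (i : Fin n) : ∃ Yf : Finset V, ↑Yf = T.Y i ∧ #Yf ≤ β * ζ := by
  have hfin k : (T.A i k).Finite := Set.finite_of_encard_eq_coe ((T.core i).1 k)
  have hcard k : #(hfin k).toFinset = ζ := by
    rw [← Nat.cast_inj (R := ℕ∞), ← (hfin k).encard_eq_coe_toFinset_card, (T.core i).1 k]
  refine ⟨univ.biUnion fun k => (hfin k).toFinset, by ext; simp [Y], ?_⟩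
  calc _ ≤ ∑ k, #(hfin k).toFinset := card_biUnion_le
    _ = β * ζ := by simp [hcard]

theorem Y_nonempty (hζ : 0 < ζ) (hβ : 0 < β) (i : Fin n) : (T.Y i).Nonempty := by
  obtain ⟨y, hy⟩ : (T.A i ⟨0, hβ⟩).Nonempty := by
    rw [← Set.encard_pos, (T.core i).1]
    exact_mod_cast hζ
  exact ⟨y, Set.mem_iUnion.2 ⟨_, hy⟩⟩

theorem exists_adj_Y (hη : 1 ≤ η) {i : Fin n} {w : V} (hw : w ∈ T.Hs i) :
    ∃ y ∈ T.Y i, G.Adj w y := by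
  obtain ⟨-, k, hk⟩ := T.mixed i w hw
  obtain ⟨y, hyA, hy⟩ := Set.encard_pos.1 ((by exact_mod_cast hη : (0 : ℕ∞) < η).trans_le hk)
  exact ⟨y, Set.mem_iUnion.2 ⟨k, hyA⟩, hy⟩

theorem mem_Zall {i : Fin n} {w : V} (hw : w ∈ T.Hs i) (hwY : w ∉ T.Y i) : w ∈ T.Zall := by
  refine ⟨Set.mem_iUnion.2 ⟨i, hw⟩, fun hY => ?_⟩
  obtain ⟨m, hm⟩ := Set.mem_iUnion.1 hY
  rcases eq_or_ne m i with rfl | hmi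
  · exact hwY hm
  · exact Set.disjoint_left.1 (T.H_disj m i hmi) (T.core_subset m hm) hw

namespace Privatization

variable {T} {δ τ : ℕ} {Pv : Set V}

theorem eq_of_adj (hPv : T.Privatization δ τ Pv) {x z z' : V} (hx : x ∈ Pv)
    (hz : z ∈ T.Zall) (hz' : z' ∈ T.Zall) (h : G.Adj x z) (h' : G.Adj x z') : z = z' := by
  obtain ⟨w, hw⟩ := Set.encard_eq_one.1 (hPv.2.2.1 x hx).1
  have h1 : z ∈ T.Zall ∩ G.neighborSet x := ⟨hz, h⟩
  have h2 : z' ∈ T.Zall ∩ G.neighborSet x := ⟨hz', h'⟩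
  rw [hw] at h1 h2
  exact h1.trans h2.symm

theorem mem_B_of_adj (hPv : T.Privatization δ τ Pv) {B : Fin n → Set V} (hB : T.Shadowing B)
    {i : Fin n} {x z : V} (hx : x ∈ Pv) (hz : z ∈ T.Zall) (hzi : z ∈ T.Hs i) (h : G.Adj x z) :
    x ∈ B i := by
  obtain ⟨m, hm⟩ := Set.mem_iUnion.1 (hB.2.2.1 ▸ hPv.1 hx)
  obtain ⟨z', hz'm, hxz'⟩ := hB.2.2.2 m x hm
  have hz'Z : z' ∈ T.Zall :=
    ⟨Set.mem_iUnion.2 ⟨m, hz'm⟩, fun hY => (hPv.2.2.1 x hx).2 z' hY hxz'⟩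
  obtain rfl := hPv.eq_of_adj hx hz'Z hz hxz' h
  obtain rfl : m = i := by_contra fun hmi => Set.disjoint_left.1 (T.H_disj m i hmi) hz'm hzi
  exact hm

theorem exists_finset_adj (hPv : T.Privatization δ τ Pv) {z : V} (hz : z ∈ T.Zall) :
    ∃ Q : Finset V, #Q = δ * τ ∧ ∀ x ∈ Q, x ∈ Pv ∧ G.Adj z x := by
  have h := hPv.2.2.2 z hz
  have hfin := Set.finite_of_encard_eq_coe h
  refine ⟨hfin.toFinset, ?_, fun x hx => hfin.mem_toFinset.1 hx⟩
  rw [← Nat.cast_inj (R := ℕ∞), ← hfin.encard_eq_coe_toFinset_card, h]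

end Privatization

variable {T} {δ τ c s : ℕ} {B : Fin n → Set V} {i : Fin n} {J : Finset (Fin n)}
  {u v : Fin n → V} {P : Fin n → Set V} {Pv : Set V} {y : V} {S : Finset (Fin n)}

namespace IsBunch

theorem not_adj_root_petal (hbunch : T.IsBunch δ B i ↑J u v P) {j j' : Fin n} (hj : j ∈ J)
    (hj' : j' ∈ J) {p : V} (hp : p ∈ P j') : ¬ G.Adj (u j) p := by
  obtain ⟨-, hdaisy, -, -, -, -, hrootpet⟩ := hbunch
  rcases eq_or_ne j j' with rfl | hne
  · obtain ⟨-, -, -, -, -, -, -, -, hup, -⟩ := hdaisy j hj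
    exact hup p hp
  · exact hrootpet j hj j' hj' hne p hp

theorem adj_root_eye (hbunch : T.IsBunch δ B i ↑J u v P) {j : Fin n} (hj : j ∈ J) :
    G.Adj (u j) (v j) := by
  obtain ⟨-, -, -, -, -, -, huv, -⟩ := hbunch.2.1 j hj
  exact huv

theorem not_adj_eye_eye (hbunch : T.IsBunch δ B i ↑J u v P) {j j' : Fin n} (hj : j ∈ J)
    (hj' : j' ∈ J) : ¬ G.Adj (v j) (v j') := by
  obtain ⟨-, -, -, -, -, hanti, -⟩ := hbunch
  rcases eq_or_ne j j' with rfl | hne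
  · exact G.irrefl
  · exact hanti j hj j' hj' hne _ (Or.inr rfl) _ (Or.inr rfl)

theorem adj_eye_petal_iff (hbunch : T.IsBunch δ B i ↑J u v P) {j j' : Fin n} (hj : j ∈ J)
    (hj' : j' ∈ J) {p : V} (hp : p ∈ P j') : G.Adj (v j) p ↔ j = j' := by
  obtain ⟨-, hdaisy, -, -, -, hanti, -⟩ := hbunch
  refine ⟨fun h => by_contra fun hne => hanti j hj j' hj' hne _ (Or.inr rfl) _ (Or.inl hp) h,
    fun h => ?_⟩
  subst h
  obtain ⟨-, -, -, -, -, -, -, hvp, -⟩ := hdaisy j hj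
  exact hvp p hp

theorem not_adj_petal_petal (hbunch : T.IsBunch δ B i ↑J u v P) {j j' : Fin n} (hj : j ∈ J)
    (hj' : j' ∈ J) {p p' : V} (hp : p ∈ P j) (hp' : p' ∈ P j') : ¬ G.Adj p p' := by
  obtain ⟨-, hdaisy, -, -, -, hanti, -⟩ := hbunch
  rcases eq_or_ne j j' with rfl | hne
  · obtain ⟨-, -, -, -, -, -, -, -, -, hpp⟩ := hdaisy j hj
    exact hpp p hp p' hp'
  · exact hanti j hj j' hj' hne _ (Or.inl hp) _ (Or.inl hp')

end IsBunch

theorem card_filter_seesDaisy_le (hB : T.Shadowing B) (hdeg : T.DegreeLeRel B s (T.U \ Pv))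
    (hPB : ∀ j ∈ J, P j ⊆ B j) (hPPv : ∀ j ∈ J, Disjoint (P j) Pv) {w : V} (hw : w ∈ T.Vall)
    (hsees : #{j ∈ J | SeesEyeOnly G v P w j} ≤ c) :
    #{j ∈ J | SeesDaisy G v P w j} ≤ c + s := by
  have hpetal : #{j ∈ J | ∃ p ∈ P j, G.Adj w p} ≤ s := by
    have hsub : (↑{j ∈ J | ∃ p ∈ P j, G.Adj w p} : Set (Fin n)) ⊆
        {m | ∃ x ∈ B m ∩ (T.U \ Pv), G.Adj w x} := fun j hj => by
      obtain ⟨hjJ, p, hp, hwp⟩ := mem_filter.1 hj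
      exact ⟨p, ⟨hPB j hjJ hp, hB.1 j (hPB j hjJ hp), Set.disjoint_left.1 (hPPv j hjJ) hp⟩, hwp⟩
    exact_mod_cast (Set.encard_coe_eq_coe_finsetCard _ ▸ Set.encard_mono hsub).trans (hdeg w hw)
  calc _ ≤ #({j ∈ J | SeesEyeOnly G v P w j} ∪ {j ∈ J | ∃ p ∈ P j, G.Adj w p}) :=
        card_le_card fun j hj => by
          obtain ⟨hjJ, hj⟩ := mem_filter.1 hj
          by_cases hp : ∃ p ∈ P j, G.Adj w p
          · exact mem_union_right _ (mem_filter.2 ⟨hjJ, hp⟩)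
          · push Not at hp
            exact mem_union_left _ (mem_filter.2 ⟨hjJ, hj.resolve_right (by simpa using hp), hp⟩)
    _ ≤ c + s := (card_union_le _ _).trans (Nat.add_le_add hsees hpetal)

theorem card_filter_root_mem_Y_le (hdaisy : ∀ j ∈ J, T.IsDaisy δ B (u j) (v j) (P j))
    (hsees : ∀ w ∈ T.Y i, #{j ∈ J | SeesEyeOnly G v P w j} ≤ c) :
    #{j ∈ J | u j ∈ T.Y i} ≤ c * (β * ζ) := by
  obtain ⟨Yf, hYf, hYcard⟩ := T.exists_finset_Y i
  have hmaps : ∀ j ∈ {j ∈ J | u j ∈ T.Y i}, u j ∈ Yf := fun j hj => by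
    rw [← mem_coe, hYf]
    exact (mem_filter.1 hj).2
  have hfiber : ∀ w ∈ Yf, #{j ∈ {j ∈ J | u j ∈ T.Y i} | u j = w} ≤ c := fun w hw => by
    refine (card_le_card fun j hj => ?_).trans (hsees w (hYf ▸ mem_coe.2 hw))
    simp only [mem_filter] at hj
    obtain ⟨⟨hjJ, -⟩, rfl⟩ := hj
    obtain ⟨-, -, -, -, -, -, huv, -, hup, -⟩ := hdaisy j hjJ
    exact mem_filter.2 ⟨hjJ, huv, hup⟩
  exact (card_le_mul_card_image_of_maps_to hmaps c hfiber).trans (Nat.mul_le_mul_left c hYcard)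

theorem exists_subset_pairwise_root_not_adj_eye (hbunch : T.IsBunch δ B i ↑J u v P)
    (hsees : ∀ w ∈ T.Hs i, #{j ∈ J | SeesEyeOnly G v P w j} ≤ c) {S : Finset (Fin n)}
    (hSJ : S ⊆ J) : ∃ S' ⊆ S, #S ≤ (2 * c + 1) * #S' ∧
      (S' : Set (Fin n)).Pairwise fun j j' => ¬ G.Adj (u j) (v j') := by
  obtain ⟨-, -, hroot, -, -, -, hrootpet⟩ := hbunch
  refine exists_subset_pairwise_not_rel _ c S fun a ha =>
    (card_le_card fun b hb => ?_).trans (hsees (u a) (hroot a (hSJ ha)))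
  obtain ⟨hbS, hab, hadj⟩ := mem_filter.1 hb
  exact mem_filter.2 ⟨hSJ hbS, hadj, hrootpet a (hSJ ha) b (hSJ hbS) hab⟩

variable (T) in
structure IsCleanSubbunch (J : Finset (Fin n)) (u v : Fin n → V) (y : V) (S : Finset (Fin n)) :
    Prop where
  subset : S ⊆ J
  root_mem_Zall : ∀ j ∈ S, u j ∈ T.Zall
  adj_root : ∀ j ∈ S, G.Adj y (u j)
  roots_not_adj : ∀ j ∈ S, ∀ j' ∈ S, ¬ G.Adj (u j) (u j')
  root_not_adj_eye : (S : Set (Fin n)).Pairwise fun j j' => ¬ G.Adj (u j) (v j')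

theorem exists_isCleanSubbunch (hη : 1 ≤ η) (hchi : ChiTwoLe G τ)
    (hbunch : T.IsBunch δ B i ↑J u v P)
    (hsees : ∀ w ∈ T.Hs i, #{j ∈ J | SeesEyeOnly G v P w j} ≤ c) (hY : (T.Y i).Nonempty) :
    ∃ y ∈ T.Y i, ∃ S, T.IsCleanSubbunch J u v y S ∧
      #J ≤ β * ζ * (τ * ((2 * c + 1) * #S) + c) := by
  have hdaisy := hbunch.2.1
  have hroot := hbunch.2.2.1
  set J0 := {j ∈ J | u j ∉ T.Y i}
  have h0 : #J ≤ #J0 + c * (β * ζ) := by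
    have hsplit : #{j ∈ J | u j ∈ T.Y i} + #J0 = #J := by
      convert card_filter_add_card_filter_not (s := J) (fun j => u j ∈ T.Y i)
    have := card_filter_root_mem_Y_le hdaisy fun w hw => hsees w (T.core_subset i hw)
    omega
  obtain ⟨Yf, hYf, hYcard⟩ := T.exists_finset_Y i
  obtain ⟨y, hy, h1⟩ := exists_card_le_mul_card_filter J0 (t := Yf)
    (by rwa [← coe_nonempty, hYf]) (fun j y => G.Adj y (u j)) fun j hj => by
      obtain ⟨y, hy, hadj⟩ := T.exists_adj_Y hη (hroot j (mem_filter.1 hj).1)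
      exact ⟨y, by rwa [← mem_coe, hYf], hadj.symm⟩
  rw [← mem_coe, hYf] at hy
  obtain ⟨J2, hJ21, h2, hJ2⟩ :=
    hchi.exists_subset_forall_not_adj (S := {j ∈ J0 | G.Adj y (u j)}) (u := u)
      fun j hj => (mem_filter.1 hj).2
  have hJ20 : J2 ⊆ J0 := hJ21.trans (filter_subset _ _)
  obtain ⟨J3, hJ32, h3, hJ3⟩ :=
    exists_subset_pairwise_root_not_adj_eye hbunch hsees (hJ20.trans (filter_subset _ _))
  refine ⟨y, hy, J3, ⟨fun j hj => (mem_filter.1 (hJ20 (hJ32 hj))).1, fun j hj => ?_,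
    fun j hj => (mem_filter.1 (hJ21 (hJ32 hj))).2,
    fun j hj j' hj' => hJ2 j (hJ32 hj) j' (hJ32 hj'), hJ3⟩, ?_⟩
  · obtain ⟨hjJ, hjY⟩ := mem_filter.1 (hJ20 (hJ32 hj))
    exact T.mem_Zall (hroot j hjJ) hjY
  calc #J ≤ #J0 + c * (β * ζ) := h0
    _ ≤ β * ζ * #{j ∈ J0 | G.Adj y (u j)} + c * (β * ζ) := by
        gcongr
        exact h1.trans (Nat.mul_le_mul_right _ hYcard)
    _ ≤ β * ζ * (τ * #J2) + c * (β * ζ) := by gcongr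
    _ ≤ β * ζ * (τ * ((2 * c + 1) * #J3)) + c * (β * ζ) := by gcongr
    _ = β * ζ * (τ * ((2 * c + 1) * #J3) + c) := by ring

theorem mem_Vall_of_mem_union (hB : T.Shadowing B) {w : V} (hw : w ∈ T.Hs i ∪ B i) :
    w ∈ T.Vall :=
  hw.imp (fun h => Set.mem_iUnion.2 ⟨i, h⟩) fun h => hB.1 i h

namespace IsCleanSubbunch

theorem injOn_root (hS : T.IsCleanSubbunch J u v y S) (hbunch : T.IsBunch δ B i ↑J u v P) :
    Set.InjOn u ↑S := fun _ hj _ hj' h => by_contra fun hne =>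
  hS.root_not_adj_eye hj hj' hne (h ▸ hbunch.adj_root_eye (hS.subset hj'))

theorem adj_root_iff (hS : T.IsCleanSubbunch J u v y S) (hbunch : T.IsBunch δ B i ↑J u v P)
    (hPv : T.Privatization δ τ Pv) {j j' : Fin n} (hj : j ∈ S) (hj' : j' ∈ S) {x : V}
    (hx : x ∈ Pv) (h : G.Adj (u j') x) : G.Adj (u j) x ↔ j = j' :=
  ⟨fun hjx => hS.injOn_root hbunch hj hj' (hPv.eq_of_adj hx (hS.root_mem_Zall j hj)
    (hS.root_mem_Zall j' hj') hjx.symm h.symm), fun e => e ▸ h⟩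

end IsCleanSubbunch

theorem exists_private_leaves (hchi : ChiTwoLe G τ) (hPv : T.Privatization δ τ Pv)
    (hS : T.IsCleanSubbunch J u v y S) (hcard : δ * τ ≤ #S) :
    ∃ D ⊆ S, #D = δ ∧ ∃ L : Fin n → Finset V,
      (∀ j ∈ D, #(L j) = δ ∧ ∀ x ∈ L j, x ∈ Pv ∧ G.Adj (u j) x) ∧
      ∀ j ∈ D, ∀ j' ∈ D, ∀ x ∈ L j, ∀ x' ∈ L j', ¬ G.Adj x x' := by
  obtain ⟨col, hcol⟩ := hchi.exists_coloring y
  choose! Q hQcard hQ using fun j hj => hPv.exists_finset_adj (hS.root_mem_Zall j hj)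
  obtain ⟨k, D, hDS, hD, hL⟩ := exists_monochromatic_subfamily (hchi.pos y) col S Q
    (by rwa [mul_comm]) fun j hj => by rw [hQcard j hj, mul_comm]
  choose! L hLQ hLcard hLcol using hL
  have hLD : ∀ j ∈ D, ∀ x ∈ L j, x ∈ Pv ∧ G.Adj (u j) x := fun j hj x hx =>
    hQ j (hDS hj) x (hLQ j hj hx)
  -- All leaves lie in `N²[y]` and have colour `k`, hence are pairwise nonadjacent.
  have hball : ∀ j ∈ D, ∀ x ∈ L j, x ∈ Ball2 G y := fun j hj x hx =>
    Or.inr (Or.inr ⟨u j, hS.adj_root j (hDS hj), (hLD j hj x hx).2⟩)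
  exact ⟨D, hDS, hD, L, fun j hj => ⟨hLcard j hj, hLD j hj⟩,
    fun j hj j' hj' x hx x' hx' hadj => hcol x (hball j hj x hx) x' (hball j' hj' x' hx') hadj
      ((hLcol j hj x hx).trans (hLcol j' hj' x' hx').symm)⟩

theorem exists_far_daisies (hB : T.Shadowing B) (hdeg : T.DegreeLeRel B s (T.U \ Pv))
    (hPv : T.Privatization δ τ Pv) (hbunch : T.IsBunch δ B i ↑J u v P)
    (hPPv : ∀ j ∈ J, Disjoint (P j) Pv)
    (hsees : ∀ w ∈ T.Hs i ∪ B i, #{j ∈ J | SeesEyeOnly G v P w j} ≤ c)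
    (hy : y ∈ T.Y i) (hS : T.IsCleanSubbunch J u v y S) {D : Finset (Fin n)} (hDS : D ⊆ S)
    (hD : #D = δ) {L : Fin n → Finset V}
    (hL : ∀ j ∈ D, #(L j) = δ ∧ ∀ x ∈ L j, x ∈ Pv ∧ G.Adj (u j) x)
    (hcard : 2 * δ + (c + s) * (δ ^ 2 + 1) ≤ #S) :
    ∃ E ⊆ S \ D, #E = δ ∧ ∀ j ∈ E, ∀ w ∈ insert y (D.biUnion L), ¬ SeesDaisy G v P w j := by
  set W := insert y (D.biUnion L)
  have hW : ∀ w ∈ W, w ∈ T.Hs i ∪ B i := fun w hw => by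
    rcases mem_insert.1 hw with rfl | hw
    · exact Or.inl (T.core_subset i hy)
    obtain ⟨j, hj, hwL⟩ := mem_biUnion.1 hw
    obtain ⟨hwPv, hadj⟩ := (hL j hj).2 w hwL
    exact Or.inr (hPv.mem_B_of_adj hB hwPv (hS.root_mem_Zall j (hDS hj))
      (hbunch.2.2.1 j (hS.subset (hDS hj))) hadj.symm)
  have hWcard : #W ≤ δ ^ 2 + 1 :=
    calc #W ≤ #(D.biUnion L) + 1 := card_insert_le _ _
      _ ≤ ∑ j ∈ D, #(L j) + 1 := by gcongr; exact card_biUnion_le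
      _ = δ ^ 2 + 1 := by rw [sum_congr rfl fun j hj => (hL j hj).1, sum_const, hD, smul_eq_mul, sq]
  have hcount := card_le_card_filter_forall_not_add (S \ D) W (fun w j => SeesDaisy G v P w j)
    (d := c + s) fun w hw =>
      (card_le_card (filter_subset_filter _ (sdiff_subset.trans hS.subset))).trans
        (card_filter_seesDaisy_le hB hdeg hbunch.2.2.2.1 hPPv
          (mem_Vall_of_mem_union hB (hW w hw)) (hsees w (hW w hw)))
  have hSD : #(S \ D) = #S - δ := by rw [card_sdiff_of_subset hDS, hD]
  have := Nat.mul_le_mul_left (c + s) hWcard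
  obtain ⟨E, hE, hEcard⟩ :=
    exists_subset_card_eq (s := {j ∈ S \ D | ∀ w ∈ W, ¬ SeesDaisy G v P w j}) (n := δ)
      (by rw [mul_comm] at this; omega)
  exact ⟨E, hE.trans (filter_subset _ _), hEcard, fun j hj => (mem_filter.1 (hE hj)).2⟩

theorem nonempty_embedding_of_far_daisies (hPv : T.Privatization δ τ Pv)
    (hbunch : T.IsBunch δ B i ↑J u v P) (hy : y ∈ T.Y i) (hS : T.IsCleanSubbunch J u v y S)
    {D E : Finset (Fin n)} (hDS : D ⊆ S) (hES : E ⊆ S \ D) (hD : #D = δ) (hE : #E = δ)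
    {L : Fin n → Finset V} (hL : ∀ j ∈ D, #(L j) = δ ∧ ∀ x ∈ L j, x ∈ Pv ∧ G.Adj (u j) x)
    (hLL : ∀ j ∈ D, ∀ j' ∈ D, ∀ x ∈ L j, ∀ x' ∈ L j', ¬ G.Adj x x')
    (hfar : ∀ j ∈ E, ∀ w ∈ insert y (D.biUnion L), ¬ SeesDaisy G v P w j) :
    Nonempty (SimpleGraph.Embedding (TGraph δ) G) := by
  obtain ⟨da, hda, hdaD⟩ := D.exists_injective_fin_of_card_eq hD
  obtain ⟨db, hdb, hdbE⟩ := E.exists_injective_fin_of_card_eq hE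
  have hdaS t : da t ∈ S := hDS (hdaD t)
  have hdbS t : db t ∈ S := (mem_sdiff.1 (hES (hdbE t))).1
  have hdadb t t' : da t ≠ db t' := fun h => (mem_sdiff.1 (hES (hdbE t'))).2 (h ▸ hdaD t)
  have hdaJ t : da t ∈ (J : Set (Fin n)) := hS.subset (hdaS t)
  have hdbJ t : db t ∈ (J : Set (Fin n)) := hS.subset (hdbS t)
  choose l1 hl1 hl1L using fun t =>
    (L (da t)).exists_injective_fin_of_card_eq (hL _ (hdaD t)).1
  choose l2 hl2 hl2P using fun t =>
    Set.exists_injective_fin_of_encard_eq (hbunch.2.1 _ (hdbJ t)).2.2.1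
  have hleaf t m : l1 t m ∈ Pv ∧ G.Adj (u (da t)) (l1 t m) := (hL _ (hdaD t)).2 _ (hl1L t m)
  have hleafW t m : l1 t m ∈ insert y (D.biUnion L) :=
    mem_insert_of_mem (mem_biUnion.2 ⟨_, hdaD t, hl1L t m⟩)
  have hroot_leaf j (hj : j ∈ S) t m : G.Adj (u j) (l1 t m) ↔ j = da t :=
    hS.adj_root_iff hbunch hPv hj (hdaS t) (hleaf t m).1 (hleaf t m).2
  have hyfar t := hfar _ (hdbE t) y (mem_insert_self _ _)
  exact TGraph.nonempty_embedding G y (u ∘ da) (u ∘ db) (v ∘ db) l1 l2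
    (hya := fun t => hS.adj_root _ (hdaS t)) (hyb := fun t => hS.adj_root _ (hdbS t))
    (hyl1 := fun t m h => (hPv.2.2.1 _ (hleaf t m).1).2 y (Set.mem_iUnion.2 ⟨i, hy⟩) h.symm)
    (hye := fun t h => hyfar t (Or.inl h))
    (hyl2 := fun t m h => hyfar t (Or.inr ⟨_, hl2P t m, h⟩))
    (haa := fun t t' => hS.roots_not_adj _ (hdaS t) _ (hdaS t'))
    (hab := fun t t' => hS.roots_not_adj _ (hdaS t) _ (hdbS t'))
    (hbb := fun t t' => hS.roots_not_adj _ (hdbS t) _ (hdbS t'))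
    (hal1 := fun t t' m => (hroot_leaf _ (hdaS t) t' m).trans hda.eq_iff)
    (hae := fun t t' => hS.root_not_adj_eye (hdaS t) (hdbS t') (hdadb t t'))
    (hal2 := fun t t' m => hbunch.not_adj_root_petal (hdaJ t) (hdbJ t') (hl2P t' m))
    (hbl1 := fun t t' m h => hdadb t' t ((hroot_leaf _ (hdbS t) t' m).1 h).symm)
    (hbe := fun t t' => ⟨fun h => hdb (by_contra fun hne => hS.root_not_adj_eye (hdbS t)
      (hdbS t') hne h), fun h => h ▸ hbunch.adj_root_eye (hdbJ t)⟩)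
    (hbl2 := fun t t' m => hbunch.not_adj_root_petal (hdbJ t) (hdbJ t') (hl2P t' m))
    (hl1l1 := fun t m t' m' => hLL _ (hdaD t) _ (hdaD t') _ (hl1L t m) _ (hl1L t' m'))
    (hel1 := fun t t' m h => hfar _ (hdbE t) _ (hleafW t' m) (Or.inl h.symm))
    (hl1l2 := fun t m t' m' h => hfar _ (hdbE t') _ (hleafW t m) (Or.inr ⟨_, hl2P t' m', h⟩))
    (hee := fun t t' => hbunch.not_adj_eye_eye (hdbJ t) (hdbJ t'))
    (hel2 := fun t t' m =>
      (hbunch.adj_eye_petal_iff (hdbJ t) (hdbJ t') (hl2P t' m)).trans hdb.eq_iff)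
    (hl2l2 := fun t m t' m' =>
      hbunch.not_adj_petal_petal (hdbJ t) (hdbJ t') (hl2P t m) (hl2P t' m'))
    hl1 hl2

theorem nonempty_embedding_of_isCleanSubbunch (hchi : ChiTwoLe G τ) (hB : T.Shadowing B)
    (hdeg : T.DegreeLeRel B s (T.U \ Pv)) (hPv : T.Privatization δ τ Pv)
    (hbunch : T.IsBunch δ B i ↑J u v P) (hPPv : ∀ j ∈ J, Disjoint (P j) Pv)
    (hsees : ∀ w ∈ T.Hs i ∪ B i, #{j ∈ J | SeesEyeOnly G v P w j} ≤ c)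
    (hy : y ∈ T.Y i) (hS : T.IsCleanSubbunch J u v y S)
    (hcard : δ * τ + 2 * δ + (c + s) * (δ ^ 2 + 1) ≤ #S) :
    Nonempty (SimpleGraph.Embedding (TGraph δ) G) := by
  obtain ⟨D, hDS, hD, L, hL, hLL⟩ := exists_private_leaves hchi hPv hS (by omega)
  obtain ⟨E, hES, hE, hfar⟩ :=
    exists_far_daisies hB hdeg hPv hbunch hPPv hsees hy hS hDS hD hL (by omega)
  exact nonempty_embedding_of_far_daisies hPv hbunch hy hS hDS hES hD hE hL hLL hfar

end TemplateArray

theorem card_filter_seesEyeOnly_lt {V : Type} {G : SimpleGraph V} {n q : ℕ} {J : Finset (Fin n)}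
    {v : Fin n → V} {P : Fin n → Set V} {w : V}
    (h : ∀ J' ⊆ (J : Set (Fin n)), J'.encard = q →
      ∃ j ∈ J', G.Adj w (v j) → ∃ p ∈ P j, G.Adj w p) :
    #{j ∈ J | SeesEyeOnly G v P w j} < q := by
  by_contra! hq
  obtain ⟨J', hJ', rfl⟩ := exists_subset_card_eq hq
  obtain ⟨j, hj, hbad⟩ := h J' (coe_subset.2 (hJ'.trans (filter_subset _ _))) (by simp)
  obtain ⟨-, hadj, hpet⟩ := mem_filter.1 (hJ' hj)
  obtain ⟨p, hp, hwp⟩ := hbad hadj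
  exact hpet p hp hwp

theorem le_of_two_mul_succ_mul_le {b τ c M k : ℕ} (hb : 0 < b) (hτ : 0 < τ)
    (h : b * (2 * (c + 1) * M * τ) ≤ b * (τ * ((2 * c + 1) * k) + c)) : M ≤ k := by
  have h' := Nat.le_of_mul_le_mul_left h hb
  by_contra! hk
  nlinarith [Nat.mul_le_mul_left (τ * (2 * c + 1)) hk]

theorem statement17_general (τ α δ β ζ η q s : ℕ) (hβ : 2 ≤ β)
    (θ : ℕ → ℕ) (hη : 1 ≤ η) (hζ : max η α ≤ ζ)
    (V : Type) (G : SimpleGraph V) (hG : Conditions τ α δ β θ G)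
    (n : ℕ) (T : TemplateArray G α β ζ η n)
    (Pv : Set V) (hPv : T.Privatization δ τ Pv)
    (B : Fin n → Set V) (hB : T.Shadowing B) (hdeg : T.DegreeLeRel B s (T.U \ Pv))
    (i : Fin n) (J : Set (Fin n)) (u v : Fin n → V) (P : Fin n → Set V)
    (hbunch : T.IsBunch δ B i J u v P)
    (hPvdisj : ∀ j ∈ J, insert (u j) (insert (v j) (P j)) ∩ Pv = ∅)
    (hJ : J.encard =
      ((2 * q * ζ * β * (1 + (q + s) * (δ ^ 2 + 1) + 2 * δ + δ * τ) * τ : ℕ) : ℕ∞)) :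
    ∃ w ∈ T.Hs i ∪ B i, ∃ J' ⊆ J, J'.encard = (q : ℕ∞) ∧
      ∀ j ∈ J', G.Adj w (v j) ∧ ∀ p ∈ P j, ¬ G.Adj w p := by
  obtain ⟨hfree, hchi, -⟩ := hG
  lift J to Finset (Fin n) using J.toFinite
  by_contra! hcon
  have hfew w (hw : w ∈ T.Hs i ∪ B i) := card_filter_seesEyeOnly_lt (hcon w hw)
  obtain ⟨y0, hy0⟩ := T.Y_nonempty (by omega) (by omega) i
  have hq : 0 < q := (Nat.zero_le _).trans_lt (hfew y0 (Or.inl (T.core_subset i hy0)))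
  have hsees w hw : #{j ∈ J | SeesEyeOnly G v P w j} ≤ q - 1 :=
    Nat.le_sub_one_of_lt (hfew w hw)
  obtain ⟨y, hy, S, hS, hJS⟩ := T.exists_isCleanSubbunch hη hchi hbunch
    (fun w hw => hsees w (Or.inl hw)) ⟨y0, hy0⟩
  have hJcard : #J = 2 * q * ζ * β * (1 + (q + s) * (δ ^ 2 + 1) + 2 * δ + δ * τ) * τ := by
    exact_mod_cast (Set.encard_coe_eq_coe_finsetCard J).symm.trans hJ
  have hM := le_of_two_mul_succ_mul_le (b := β * ζ) (c := q - 1)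
    (M := 1 + (q + s) * (δ ^ 2 + 1) + 2 * δ + δ * τ) (Nat.mul_pos (by omega) (by omega))
    (hchi.pos y0) (le_of_eq_of_le (by rw [Nat.sub_add_cancel hq, hJcard]; ring) hJS)
  have hPPv : ∀ j ∈ J, Disjoint (P j) Pv := fun j hj => Set.disjoint_left.2 fun p hp hpv =>
    Set.eq_empty_iff_forall_notMem.1 (hPvdisj j hj) p ⟨Or.inr (Or.inr hp), hpv⟩
  refine hfree.false (T.nonempty_embedding_of_isCleanSubbunch hchi hB hdeg hPv hbunch hPPv
    hsees hy hS ?_).some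
  have := Nat.mul_le_mul_right (δ ^ 2 + 1) (show q - 1 + s ≤ q + s by omega)
  omega

/-- with η ≥ 1, ζ ≥ max(η,α), q,s ≥ 0, G satisfying (i)–(v), 𝒯 a 2-cleaned
(ζ,η)-template array admitting a privatization Π, B a shadowing of degree at most s
relative to U(𝒯)\Π, and a bunch of daisies of the prescribed size rooted in H_i and
avoiding Π, there is a vertex u ∈ H_i ∪ B_i adjacent to the eyes of q of the daisies and to
none of their petals. -/
theorem statement17 (τ α δ β ζ η q s : ℕ) (hα : 1 ≤ α) (hδ : 1 ≤ δ) (hβ : 2 ≤ β)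
    (θ : ℕ → ℕ) (hθ : Monotone θ) (hη : 1 ≤ η) (hζ : max η α ≤ ζ)
    (V : Type) (G : SimpleGraph V) (hG : Conditions τ α δ β θ G)
    (n : ℕ) (T : TemplateArray G α β ζ η n) (hT : T.Cleaned2)
    (Pv : Set V) (hPv : T.Privatization δ τ Pv)
    (B : Fin n → Set V) (hB : T.Shadowing B) (hdeg : T.DegreeLeRel B s (T.U \ Pv))
    (i : Fin n) (J : Set (Fin n)) (u v : Fin n → V) (P : Fin n → Set V)
    (hbunch : T.IsBunch δ B i J u v P)
    (hPvdisj : ∀ j ∈ J, insert (u j) (insert (v j) (P j)) ∩ Pv = ∅)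
    (hJ : J.encard =
      ((2 * q * ζ * β * (1 + (q + s) * (δ ^ 2 + 1) + 2 * δ + δ * τ) * τ : ℕ) : ℕ∞)) :
    ∃ w ∈ T.Hs i ∪ B i, ∃ J' ⊆ J, J'.encard = (q : ℕ∞) ∧
      ∀ j ∈ J', G.Adj w (v j) ∧ ∀ p ∈ P j, ¬ G.Adj w p :=
  statement17_general τ α δ β ζ η q s hβ θ hη hζ V G hG n T Pv hPv B hB hdeg i J u v P hbunch
    hPvdisj hJ
end
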